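/- arXiv:2510.17195 — 7 statements merged into one kernel-verified Lean document; each statement's English description precedes it below -/
import Mathlib

section
/- (Proposition 3.1(ii)) The joint domain D(C_{φ₁,ω₁}) ∩ D(C_{φ₂,ω₂}) = {f ∈ L²(μ) : ω₁·(f∘φ₁) ∈ L²(μ) and ω₂·(f∘φ₂) ∈ L²(μ)} is dense in L²(μ). -/
open MeasureTheory
open scoped ENNReal NNReal Topology

lemma aux_cov
    {X : Type*} [MeasurableSpace X] {μ : Measure X}
    {φ : X → X} {ω : X → ℂ} (hφ : Measurable φ) (hω : Measurable ω)
    {h : X → ℝ≥0∞} (hh : Measurable h)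
    (hrn : (μ.withDensity fun x => (‖ω x‖₊ : ℝ≥0∞) ^ 2).map φ = μ.withDensity h)
    {F : X → ℝ≥0∞} (hF : Measurable F) :
    ∫⁻ x, (‖ω x‖₊ : ℝ≥0∞) ^ 2 * F (φ x) ∂μ = ∫⁻ y, h y * F y ∂μ := by
  have hw : Measurable fun x => (‖ω x‖₊ : ℝ≥0∞) ^ 2 :=
    (hω.nnnorm.coe_nnreal_ennreal).pow_const 2
  have e1 := lintegral_withDensity_eq_lintegral_mul μ hw (hF.comp hφ)
  have e2 := lintegral_withDensity_eq_lintegral_mul μ hh hF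
  simp only [Pi.mul_def, Function.comp] at e1 e2
  rw [← e1, ← lintegral_map hF hφ, hrn, e2]

lemma aux_memLp
    {X : Type*} [MeasurableSpace X] {μ : Measure X}
    {φ : X → X} {ω : X → ℂ} (hφ : Measurable φ) (hω : Measurable ω)
    {h : X → ℝ≥0∞} (hh : Measurable h)
    (hrn : (μ.withDensity fun x => (‖ω x‖₊ : ℝ≥0∞) ^ 2).map φ = μ.withDensity h)
    {f : X → ℂ} (hf : StronglyMeasurable f)
    (hfL : ∫⁻ x, (‖f x‖₊ : ℝ≥0∞) ^ 2 ∂μ ≠ ∞)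
    {E : Set X} (hE : MeasurableSet E) (n : ℕ) (hEh : ∀ x ∈ E, h x ≤ n)
    {g : X → ℂ} (hg : StronglyMeasurable g) (hgf : g =ᵐ[μ] E.indicator f) :
    MemLp (fun x => ω x * g (φ x)) 2 μ := by
  have hind : StronglyMeasurable (E.indicator f) := hf.indicator hE
  -- a.e. equality transferred through φ
  have hae : (fun x => ω x * g (φ x)) =ᵐ[μ] fun x => ω x * (E.indicator f) (φ x) := by
    set N : Set X := {x | g x ≠ E.indicator f x} with hN
    have hNmeas : MeasurableSet N := (hg.measurableSet_eq_fun hind).compl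
    have hNμ : μ N = 0 := hgf
    have hwd : (μ.withDensity fun x => (‖ω x‖₊ : ℝ≥0∞) ^ 2) (φ ⁻¹' N) = 0 := by
      have := congrArg (fun ν : Measure X => ν N) hrn
      simp only [Measure.map_apply hφ hNmeas] at this
      rw [this]
      exact (withDensity_absolutelyContinuous μ h) hNμ
    have hw : Measurable fun x => (‖ω x‖₊ : ℝ≥0∞) ^ 2 :=
      (hω.nnnorm.coe_nnreal_ennreal).pow_const 2
    rw [withDensity_apply_eq_zero hw] at hwd
    have : μ {x | ¬(ω x * g (φ x) = ω x * (E.indicator f) (φ x))} = 0 := by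
      refine measure_mono_null ?_ hwd
      intro x hx
      simp only [Set.mem_setOf_eq] at hx ⊢
      constructor
      · intro hw0
        apply hx
        have hω0 : ω x = 0 := by
          by_contra h0
          simp [h0] at hw0
        simp [hω0]
      · show g (φ x) ≠ E.indicator f (φ x)
        intro hxN
        exact hx (by rw [hxN])
    exact this
  refine (MemLp.ae_eq hae.symm ?_)
  refine ⟨(hω.stronglyMeasurable.mul (hind.comp_measurable hφ)).aestronglyMeasurable, ?_⟩
  rw [eLpNorm_eq_lintegral_rpow_enorm_toReal two_ne_zero ENNReal.ofNat_ne_top]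
  simp only [enorm_eq_nnnorm]
  refine ENNReal.rpow_lt_top_of_nonneg (by positivity) ?_
  have hconv : ∀ x, (‖ω x * (E.indicator f) (φ x)‖₊ : ℝ≥0∞) ^ (2 : ℝ≥0∞).toReal
      = (‖ω x‖₊ : ℝ≥0∞) ^ 2 * (fun y => (‖E.indicator f y‖₊ : ℝ≥0∞) ^ 2) (φ x) := by
    intro x
    rw [ENNReal.toReal_ofNat, show (2:ℝ) = ((2:ℕ):ℝ) by norm_num, ENNReal.rpow_natCast]
    push_cast [nnnorm_mul]
    ring
  simp_rw [hconv]
  rw [aux_cov hφ hω hh hrn ((hind.measurable.nnnorm.coe_nnreal_ennreal).pow_const 2)]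
  have hbound : ∀ y, h y * (‖E.indicator f y‖₊ : ℝ≥0∞) ^ 2
      ≤ (n : ℝ≥0∞) * (‖f y‖₊ : ℝ≥0∞) ^ 2 := by
    intro y
    by_cases hy : y ∈ E
    · rw [Set.indicator_of_mem hy]
      exact mul_le_mul_left (hEh y hy) _
    · simp [Set.indicator_of_notMem hy]
  have : ∫⁻ y, h y * (‖E.indicator f y‖₊ : ℝ≥0∞) ^ 2 ∂μ < ∞ := by
    calc ∫⁻ y, h y * (‖E.indicator f y‖₊ : ℝ≥0∞) ^ 2 ∂μ
        ≤ ∫⁻ y, (n : ℝ≥0∞) * (‖f y‖₊ : ℝ≥0∞) ^ 2 ∂μ := lintegral_mono hbound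
      _ = (n : ℝ≥0∞) * ∫⁻ y, (‖f y‖₊ : ℝ≥0∞) ^ 2 ∂μ := lintegral_const_mul _
          ((hf.measurable.nnnorm.coe_nnreal_ennreal).pow_const 2)
      _ < ∞ := ENNReal.mul_lt_top (by simp) (lt_top_iff_ne_top.mpr hfL)
  exact this.ne

lemma aux_int {X : Type*} [MeasurableSpace X] {μ : Measure X} {f : X → ℂ}
    (hf : MemLp f 2 μ) : ∫⁻ x, (‖f x‖₊ : ℝ≥0∞) ^ 2 ∂μ ≠ ∞ := by
  have h2 := hf.2
  rw [eLpNorm_eq_lintegral_rpow_enorm_toReal two_ne_zero ENNReal.ofNat_ne_top,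
    ENNReal.rpow_lt_top_iff_of_pos (by norm_num)] at h2
  simpa [show ((2:ℝ≥0∞)).toReal = ((2:ℕ):ℝ) by norm_num, ENNReal.rpow_natCast, enorm_eq_nnnorm]
    using h2.ne


/-- **Proposition 3.1(ii)**: the joint domain
`D(C_{φ₁,ω₁}) ∩ D(C_{φ₂,ω₂}) = {f ∈ L²(μ) : ωᵢ·(f∘φᵢ) ∈ L²(μ), i = 1,2}`
is dense in `L²(μ)`. -/
theorem stmt_1
    {X : Type*} [MeasurableSpace X] (μ : Measure X) [SigmaFinite μ]
    (φ₁ φ₂ : X → X) (ω₁ ω₂ : X → ℂ)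
    (hφ₁ : Measurable φ₁) (hφ₂ : Measurable φ₂)
    (hω₁ : Measurable ω₁) (hω₂ : Measurable ω₂)
    (h₁ h₂ : X → ℝ≥0∞) (hh₁ : Measurable h₁) (hh₂ : Measurable h₂)
    -- `C_{φᵢ,ωᵢ}` is well defined with Radon–Nikodym derivative `hᵢ`
    (hrn₁ : (μ.withDensity fun x => (‖ω₁ x‖₊ : ℝ≥0∞) ^ 2).map φ₁ = μ.withDensity h₁)
    (hrn₂ : (μ.withDensity fun x => (‖ω₂ x‖₊ : ℝ≥0∞) ^ 2).map φ₂ = μ.withDensity h₂)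
    -- `C_{φᵢ,ωᵢ}` is densely defined, i.e. `hᵢ < ∞` a.e. `[μ]`
    (hfin₁ : ∀ᵐ x ∂μ, h₁ x < ⊤) (hfin₂ : ∀ᵐ x ∂μ, h₂ x < ⊤) :
    Dense {f : Lp ℂ 2 μ |
      MemLp (fun x => ω₁ x * (f : X → ℂ) (φ₁ x)) 2 μ ∧
      MemLp (fun x => ω₂ x * (f : X → ℂ) (φ₂ x)) 2 μ} := by
  intro f
  set E : ℕ → Set X := fun n => {x | h₁ x + h₂ x ≤ (n : ℝ≥0∞)} with hE
  have hEmeas : ∀ n, MeasurableSet (E n) :=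
    fun n => measurableSet_le (hh₁.add hh₂) measurable_const
  have hmemn : ∀ n, MemLp ((E n).indicator (⇑f)) 2 μ :=
    fun n => (Lp.memLp f).indicator (hEmeas n)
  set g : ℕ → Lp ℂ 2 μ := fun n => (hmemn n).toLp _ with hg
  have hgcoe : ∀ n, ⇑(g n) =ᵐ[μ] (E n).indicator (⇑f) := fun n => (hmemn n).coeFn_toLp
  have hfsm : StronglyMeasurable (⇑f) := Lp.stronglyMeasurable f
  have hfint : ∫⁻ x, (‖(f : X → ℂ) x‖₊ : ℝ≥0∞) ^ 2 ∂μ ≠ ∞ := aux_int (Lp.memLp f)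
  have hmemS : ∀ n, g n ∈ {f : Lp ℂ 2 μ |
      MemLp (fun x => ω₁ x * (f : X → ℂ) (φ₁ x)) 2 μ ∧
      MemLp (fun x => ω₂ x * (f : X → ℂ) (φ₂ x)) 2 μ} := by
    intro n
    refine ⟨aux_memLp hφ₁ hω₁ hh₁ hrn₁ hfsm hfint (hEmeas n) n
        (fun x hx => le_trans le_self_add hx) (Lp.stronglyMeasurable (g n)) (hgcoe n),
      aux_memLp hφ₂ hω₂ hh₂ hrn₂ hfsm hfint (hEmeas n) n
        (fun x hx => le_trans le_add_self hx) (Lp.stronglyMeasurable (g n)) (hgcoe n)⟩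
  -- convergence of the truncations
  have hb : Measurable fun y => (‖(f : X → ℂ) y‖₊ : ℝ≥0∞) ^ 2 :=
    (hfsm.measurable.nnnorm.coe_nnreal_ennreal).pow_const 2
  have hD : Filter.Tendsto
      (fun n => ∫⁻ x, (E n)ᶜ.indicator (fun y => (‖(f : X → ℂ) y‖₊ : ℝ≥0∞) ^ 2) x ∂μ)
      Filter.atTop (𝓝 0) := by
    have := tendsto_lintegral_of_dominated_convergence (μ := μ)
      (F := fun n x => (E n)ᶜ.indicator (fun y => (‖(f : X → ℂ) y‖₊ : ℝ≥0∞) ^ 2) x)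
      (f := fun _ => 0) (bound := fun y => (‖(f : X → ℂ) y‖₊ : ℝ≥0∞) ^ 2)
      (fun n => hb.indicator (hEmeas n).compl)
      (fun n => Filter.Eventually.of_forall (Set.indicator_le_self _ _))
      hfint ?_
    · simpa using this
    · filter_upwards [hfin₁, hfin₂] with x hx1 hx2
      obtain ⟨n, hn⟩ := ENNReal.exists_nat_gt (ENNReal.add_lt_top.2 ⟨hx1, hx2⟩).ne
      apply tendsto_atTop_of_eventually_const (i₀ := n)
      intro m hm
      have hxE : x ∈ E m := le_trans hn.le (by exact_mod_cast Nat.cast_le.2 hm)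
      simp [Set.indicator_of_notMem (Set.notMem_compl_iff.mpr hxE)]
  have heq : ∀ n, eLpNorm (⇑(g n - f)) 2 μ
      = (∫⁻ x, (E n)ᶜ.indicator (fun y => (‖(f : X → ℂ) y‖₊ : ℝ≥0∞) ^ 2) x ∂μ)
        ^ (1 / (2 : ℝ)) := by
    intro n
    have hae : ⇑(g n - f) =ᵐ[μ] -((E n)ᶜ.indicator (⇑f)) := by
      filter_upwards [Lp.coeFn_sub (g n) f, hgcoe n] with x hx1 hx2
      rw [hx1, Pi.sub_apply, hx2]
      by_cases hx : x ∈ E n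
      · simp [Set.indicator_of_mem hx, Set.indicator_of_notMem (Set.notMem_compl_iff.mpr hx)]
      · simp [Set.indicator_of_notMem hx,
          Set.indicator_of_mem (show x ∈ (E n)ᶜ by simpa using hx)]
    rw [eLpNorm_congr_ae hae, eLpNorm_neg,
      eLpNorm_eq_lintegral_rpow_enorm_toReal two_ne_zero ENNReal.ofNat_ne_top]
    simp only [enorm_eq_nnnorm]
    have hlint : ∫⁻ x, (‖(E n)ᶜ.indicator (⇑f) x‖₊ : ℝ≥0∞) ^ (2:ℝ≥0∞).toReal ∂μ
        = ∫⁻ x, (E n)ᶜ.indicator (fun y => (‖(f : X → ℂ) y‖₊ : ℝ≥0∞) ^ 2) x ∂μ := by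
      apply lintegral_congr; intro x
      by_cases hx : x ∈ (E n)ᶜ
      · simp [Set.indicator_of_mem hx, show ((2:ℝ≥0∞)).toReal = ((2:ℕ):ℝ) by norm_num,
          ENNReal.rpow_natCast]
      · simp [Set.indicator_of_notMem hx,
          ENNReal.zero_rpow_of_pos (show (0:ℝ) < (2:ℝ≥0∞).toReal by norm_num)]
    rw [hlint]
    norm_num
  have htend : Filter.Tendsto g Filter.atTop (𝓝 f) := by
    rw [tendsto_iff_norm_sub_tendsto_zero]
    have hnorm : ∀ n, ‖g n - f‖ = (eLpNorm (⇑(g n - f)) 2 μ).toReal := fun n => Lp.norm_def _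
    simp_rw [hnorm, heq]
    have h1 : Filter.Tendsto
        (fun n => (∫⁻ x, (E n)ᶜ.indicator (fun y => (‖(f : X → ℂ) y‖₊ : ℝ≥0∞) ^ 2) x ∂μ)
          ^ (1 / (2 : ℝ))) Filter.atTop (𝓝 0) := by
      have := (ENNReal.continuous_rpow_const (y := 1 / (2:ℝ))).tendsto 0
      have h2 := this.comp hD
      simpa [ENNReal.zero_rpow_of_pos (show (0:ℝ) < 1/2 by norm_num), Function.comp_def] using h2
    have := (ENNReal.tendsto_toReal (show (0:ℝ≥0∞) ≠ ⊤ by simp)).comp h1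
    simpa [Function.comp_def] using this
  exact mem_closure_of_tendsto htend (Filter.Eventually.of_forall hmemS)
end

section
/- (Proposition 3.1(iv)) Let 𝐂 denote the column operator from L²(μ) to the Hilbert-space direct sum L²(μ) ⊕ L²(μ), defined on D(C_{φ₁,ω₁}) ∩ D(C_{φ₂,ω₂}) by 𝐂f = (C_{φ₁,ω₁}f, C_{φ₂,ω₂}f), and let R denote the row operator from L²(μ) ⊕ L²(μ) to L²(μ), defined on D(C_{φ₁,ω₁}*) × D(C_{φ₂,ω₂}*) by R(f₁,f₂) = C_{φ₁,ω₁}*f₁ + C_{φ₂,ω₂}*f₂, where Cᵢ* is the Hilbert-space adjoint of the densely defined operator C_{φᵢ,ωᵢ}. Then 𝐂 and R are densely defined, R is closable, and the Hilbert-space adjoint 𝐂* equals the closure of R. -/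
open MeasureTheory
open scoped ENNReal NNReal

noncomputable section
namespace Prop31

local notation "⟪" x ", " y "⟫" => @inner ℂ _ _ x y

/-! ### Abstract Hilbert space lemmas -/

variable {E F : Type*} [NormedAddCommGroup E] [InnerProductSpace ℂ E] [CompleteSpace E]
  [NormedAddCommGroup F] [InnerProductSpace ℂ F] [CompleteSpace F]

lemma mem_graph_adjoint {S : E →ₗ.[ℂ] F} (hS : Dense (S.domain : Set E)) {y : F} {z : E} :
    (y, z) ∈ S.adjoint.graph ↔ ∀ x : S.domain, ⟪z, (x : E)⟫ = ⟪y, S x⟫ := by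
  constructor
  · intro h x
    rw [LinearPMap.mem_graph_iff] at h
    obtain ⟨u, h1, h2⟩ := h
    have := LinearPMap.adjoint_isFormalAdjoint hS u x
    rw [h1, h2] at this
    exact this
  · intro h
    have hy : y ∈ S.adjoint.domain :=
      LinearPMap.mem_adjoint_domain_of_exists y ⟨z, h⟩
    have hz : S.adjoint ⟨y, hy⟩ = z := LinearPMap.adjoint_apply_eq hS ⟨y, hy⟩ h
    rw [LinearPMap.mem_graph_iff]
    exact ⟨⟨y, hy⟩, rfl, hz⟩

lemma adjoint_isClosed {S : E →ₗ.[ℂ] F} (hS : Dense (S.domain : Set E)) :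
    S.adjoint.IsClosed := by
  have hset : (S.adjoint.graph : Set (F × E)) =
      ⋂ x : S.domain, {p : F × E | ⟪p.2, (x : E)⟫ = ⟪p.1, S x⟫} := by
    ext ⟨y, z⟩
    simp only [SetLike.mem_coe, Set.mem_iInter, Set.mem_setOf_eq]
    exact mem_graph_adjoint hS
  unfold LinearPMap.IsClosed
  rw [hset]
  exact isClosed_iInter fun x =>
    isClosed_eq (Continuous.inner continuous_snd continuous_const)
      (Continuous.inner continuous_fst continuous_const)

/-- Graph of `S` seen inside the Hilbert space `WithLp 2 (E × F)`. -/
def graphL2 (S : E →ₗ.[ℂ] F) : Submodule ℂ (WithLp 2 (E × F)) :=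
  S.graph.comap ((WithLp.linearEquiv 2 ℂ (E × F)) : WithLp 2 (E × F) →ₗ[ℂ] E × F)

lemma mem_graphL2 {S : E →ₗ.[ℂ] F} {w : WithLp 2 (E × F)} :
    w ∈ graphL2 S ↔ (w.fst, w.snd) ∈ S.graph := by
  constructor <;> exact fun h => h

lemma graphL2_coe {S : E →ₗ.[ℂ] F} :
    (graphL2 S : Set (WithLp 2 (E × F))) =
      (WithLp.prodContinuousLinearEquiv 2 ℂ E F) ⁻¹' (S.graph : Set (E × F)) := by
  ext w
  constructor <;> exact fun h => h

lemma graphL2_isClosed {S : E →ₗ.[ℂ] F} (hS : S.IsClosed) :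
    IsClosed ((graphL2 S : Set (WithLp 2 (E × F)))) := by
  rw [graphL2_coe]
  exact hS.preimage (WithLp.prodContinuousLinearEquiv 2 ℂ E F).continuous

lemma mem_orth_graphL2 {S : E →ₗ.[ℂ] F} (hS : Dense (S.domain : Set E))
    {u : WithLp 2 (E × F)} (hu : u ∈ (graphL2 S)ᗮ) :
    ∃ h2 : u.snd ∈ S.adjoint.domain, S.adjoint ⟨u.snd, h2⟩ = -u.fst := by
  have key : ∀ x : S.domain, ⟪-u.fst, (x : E)⟫ = ⟪u.snd, S x⟫ := by
    intro x
    have hg : (WithLp.equiv 2 (E × F)).symm ((x : E), S x) ∈ graphL2 S := by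
      rw [mem_graphL2]
      exact S.mem_graph x
    have h0 := (Submodule.mem_orthogonal' _ _).mp hu _ hg
    rw [WithLp.prod_inner_apply, WithLp.ofLp_fst, WithLp.ofLp_snd, WithLp.ofLp_fst, WithLp.ofLp_snd] at h0
    have hfst : ((WithLp.equiv 2 (E × F)).symm ((x : E), S x)).fst = (x : E) := rfl
    have hsnd : ((WithLp.equiv 2 (E × F)).symm ((x : E), S x)).snd = S x := rfl
    rw [hfst, hsnd] at h0
    rw [inner_neg_left]
    exact neg_eq_of_add_eq_zero_right h0
  have hmem : (u.snd, -u.fst) ∈ S.adjoint.graph := (mem_graph_adjoint hS).mpr key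
  rw [LinearPMap.mem_graph_iff] at hmem
  obtain ⟨v, h1, h2⟩ := hmem
  dsimp only at h1 h2
  have hd : u.snd ∈ S.adjoint.domain := by rw [← h1]; exact v.2
  refine ⟨hd, ?_⟩
  have hv : (⟨u.snd, hd⟩ : S.adjoint.domain) = v := Subtype.ext h1.symm
  rw [hv, h2]

lemma graphL2_orth_orth {S : E →ₗ.[ℂ] F} (hS : S.IsClosed) :
    ((graphL2 S)ᗮ)ᗮ = graphL2 S := by
  rw [Submodule.orthogonal_orthogonal_eq_closure]
  exact IsClosed.submodule_topologicalClosure_eq (graphL2_isClosed hS)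

/-- If `S` is closed and densely defined then its adjoint is densely defined. -/
lemma adjoint_dense {S : E →ₗ.[ℂ] F} (hS : Dense (S.domain : Set E)) (hSc : S.IsClosed) :
    Dense (S.adjoint.domain : Set F) := by
  have key : ∀ v, v ∈ (S.adjoint.domain)ᗮ → v = 0 := by
    intro v hv
    set w : WithLp 2 (E × F) := (WithLp.equiv 2 (E × F)).symm (0, v) with hw
    have hworth : w ∈ ((graphL2 S)ᗮ)ᗮ := by
      rw [Submodule.mem_orthogonal]
      intro u hu
      obtain ⟨hud, hua⟩ := mem_orth_graphL2 hS hu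
      rw [WithLp.prod_inner_apply, WithLp.ofLp_fst, WithLp.ofLp_snd, WithLp.ofLp_fst, WithLp.ofLp_snd]
      have hfst : w.fst = (0 : E) := rfl
      have hsnd : w.snd = v := rfl
      rw [hfst, hsnd, inner_zero_right,
        (Submodule.mem_orthogonal _ _).mp hv u.snd hud, add_zero]
    rw [graphL2_orth_orth hSc, mem_graphL2, LinearPMap.mem_graph_iff] at hworth
    obtain ⟨x, h1, h2⟩ := hworth
    have h1' : (x : E) = 0 := h1
    have h2' : S x = v := h2
    have hx0 : x = 0 := Subtype.ext h1'
    rw [hx0, LinearPMap.map_zero] at h2'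
    exact h2'.symm
  have hbot : (S.adjoint.domain)ᗮ = ⊥ := (Submodule.eq_bot_iff _).mpr key
  rw [Submodule.dense_iff_topologicalClosure_eq_top,
    Submodule.topologicalClosure_eq_top_iff]
  exact hbot

/-- von Neumann: for closed densely defined `S`, any pair satisfying the defining
relation of `S††` is already in the graph of `S`. -/
lemma adjoint_adjoint_le {S : E →ₗ.[ℂ] F} (hS : Dense (S.domain : Set E)) (hSc : S.IsClosed)
    {x : E} {w : F} (h : ∀ y : S.adjoint.domain, ⟪w, (y : F)⟫ = ⟪x, S.adjoint y⟫) :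
    ∃ hx : x ∈ S.domain, S ⟨x, hx⟩ = w := by
  set w2 : WithLp 2 (E × F) := (WithLp.equiv 2 (E × F)).symm (x, w) with hw2
  have hworth : w2 ∈ ((graphL2 S)ᗮ)ᗮ := by
    rw [Submodule.mem_orthogonal]
    intro u hu
    obtain ⟨hud, hua⟩ := mem_orth_graphL2 hS hu
    rw [WithLp.prod_inner_apply, WithLp.ofLp_fst, WithLp.ofLp_snd, WithLp.ofLp_fst, WithLp.ofLp_snd]
    have hfst : w2.fst = x := rfl
    have hsnd : w2.snd = w := rfl
    rw [hfst, hsnd]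
    have h2 : ⟪u.snd, w⟫ = ⟪-u.fst, x⟫ := by
      have hy := h ⟨u.snd, hud⟩
      rw [hua] at hy
      calc ⟪u.snd, w⟫ = (starRingEnd ℂ) ⟪w, u.snd⟫ := (inner_conj_symm _ _).symm
        _ = (starRingEnd ℂ) ⟪x, -u.fst⟫ := by rw [hy]
        _ = ⟪-u.fst, x⟫ := inner_conj_symm _ _
    rw [h2, inner_neg_left]
    ring
  rw [graphL2_orth_orth hSc, mem_graphL2, LinearPMap.mem_graph_iff] at hworth
  obtain ⟨v, h1, h2⟩ := hworth
  have h1' : (v : E) = x := h1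
  have h2' : S v = w := h2
  have hd : x ∈ S.domain := by rw [← h1']; exact v.2
  refine ⟨hd, ?_⟩
  have hv : (⟨x, hd⟩ : S.domain) = v := Subtype.ext h1'.symm
  rw [hv, h2']

/-- An element orthogonal to the orthogonal complement of the graph lies in the closure
of the graph. -/
lemma mem_closure_graph_of_orth {S : E →ₗ.[ℂ] F} {y : E} {z : F}
    (h : ∀ u : WithLp 2 (E × F), u ∈ (graphL2 S)ᗮ →
      ⟪u, (WithLp.equiv 2 (E × F)).symm (y, z)⟫ = 0) :
    (y, z) ∈ S.graph.topologicalClosure := by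
  have hq : (WithLp.equiv 2 (E × F)).symm (y, z) ∈ ((graphL2 S)ᗮ)ᗮ := by
    rw [Submodule.mem_orthogonal]
    exact h
  rw [Submodule.orthogonal_orthogonal_eq_closure] at hq
  rw [← SetLike.mem_coe] at hq ⊢
  rw [Submodule.topologicalClosure_coe] at hq ⊢
  rw [graphL2_coe] at hq
  have hq2 : (WithLp.equiv 2 (E × F)).symm (y, z) ∈
      (WithLp.prodContinuousLinearEquiv 2 ℂ E F).toHomeomorph ⁻¹'
        closure (S.graph : Set (E × F)) := by
    rw [(WithLp.prodContinuousLinearEquiv 2 ℂ E F).toHomeomorph.preimage_closure]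
    exact hq
  exact hq2


/-! ### Measure-theoretic lemmas about weighted composition operators -/

section Meas

variable {X : Type*} [MeasurableSpace X] {μ : Measure X}
  {φ : X → X} {ω : X → ℂ} {h : X → ℝ≥0∞}

/-- If `N` is a `μ`-null measurable set then a.e. `x` with `φ x ∈ N` has `ω x = 0`. -/
lemma ae_omega_zero (hφ : Measurable φ) (hω : Measurable ω)
    (hrn : (μ.withDensity fun x => (‖ω x‖₊ : ℝ≥0∞) ^ 2).map φ = μ.withDensity h)
    {N : Set X} (hN : MeasurableSet N) (hN0 : μ N = 0) :
    ∀ᵐ x ∂μ, φ x ∈ N → ω x = 0 := by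
  have hm : Measurable fun x => (‖ω x‖₊ : ℝ≥0∞) ^ 2 := hω.nnnorm.coe_nnreal_ennreal.pow_const 2
  have hmapped : (μ.withDensity fun x => (‖ω x‖₊ : ℝ≥0∞) ^ 2) (φ ⁻¹' N) = 0 := by
    rw [← Measure.map_apply hφ hN, hrn]
    exact withDensity_absolutelyContinuous μ h hN0
  rw [withDensity_apply _ (hφ hN)] at hmapped
  have hz := (lintegral_eq_zero_iff hm).mp hmapped
  have hz' := (ae_restrict_iff' (hφ hN)).mp hz
  filter_upwards [hz'] with x hx hxN
  have h2 : (‖ω x‖₊ : ℝ≥0∞) ^ 2 = 0 := hx hxN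
  simpa using h2

lemma ae_comp_congr (hφ : Measurable φ) (hω : Measurable ω)
    (hrn : (μ.withDensity fun x => (‖ω x‖₊ : ℝ≥0∞) ^ 2).map φ = μ.withDensity h)
    {f g : X → ℂ} (hfg : f =ᵐ[μ] g) :
    (fun x => ω x * f (φ x)) =ᵐ[μ] fun x => ω x * g (φ x) := by
  obtain ⟨N, hsub, hNm, hN0⟩ := exists_measurable_superset_of_null (ae_iff.mp hfg)
  filter_upwards [ae_omega_zero hφ hω hrn hNm hN0] with x hx
  by_cases hc : φ x ∈ N
  · rw [hx hc]
    simp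
  · have : f (φ x) = g (φ x) := by
      by_contra hne
      exact hc (hsub hne)
    rw [this]

lemma lintegral_comp_meas (hφ : Measurable φ) (hω : Measurable ω) (hh : Measurable h)
    (hrn : (μ.withDensity fun x => (‖ω x‖₊ : ℝ≥0∞) ^ 2).map φ = μ.withDensity h)
    {f : X → ℂ} (hf : Measurable f) :
    ∫⁻ x, (‖ω x * f (φ x)‖₊ : ℝ≥0∞) ^ 2 ∂μ = ∫⁻ x, (‖f x‖₊ : ℝ≥0∞) ^ 2 * h x ∂μ := by
  have hmω : Measurable fun x => (‖ω x‖₊ : ℝ≥0∞) ^ 2 := hω.nnnorm.coe_nnreal_ennreal.pow_const 2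
  have hmfφ : Measurable fun x => (‖f (φ x)‖₊ : ℝ≥0∞) ^ 2 :=
    ((hf.comp hφ).nnnorm.coe_nnreal_ennreal).pow_const 2
  have hmf : Measurable fun x => (‖f x‖₊ : ℝ≥0∞) ^ 2 := hf.nnnorm.coe_nnreal_ennreal.pow_const 2
  calc ∫⁻ x, (‖ω x * f (φ x)‖₊ : ℝ≥0∞) ^ 2 ∂μ
      = ∫⁻ x, ((fun y => (‖ω y‖₊ : ℝ≥0∞) ^ 2) * fun y => (‖f (φ y)‖₊ : ℝ≥0∞) ^ 2) x ∂μ := by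
        apply lintegral_congr
        intro x
        simp only [Pi.mul_apply, nnnorm_mul, ENNReal.coe_mul]
        ring
    _ = ∫⁻ y, (‖f (φ y)‖₊ : ℝ≥0∞) ^ 2 ∂(μ.withDensity fun x => (‖ω x‖₊ : ℝ≥0∞) ^ 2) :=
        (lintegral_withDensity_eq_lintegral_mul μ hmω hmfφ).symm
    _ = ∫⁻ y, (‖f y‖₊ : ℝ≥0∞) ^ 2
          ∂((μ.withDensity fun x => (‖ω x‖₊ : ℝ≥0∞) ^ 2).map φ) :=
        (lintegral_map hmf hφ).symm
    _ = ∫⁻ y, (‖f y‖₊ : ℝ≥0∞) ^ 2 ∂(μ.withDensity h) := by rw [hrn]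
    _ = ∫⁻ y, (h * fun y => (‖f y‖₊ : ℝ≥0∞) ^ 2) y ∂μ :=
        lintegral_withDensity_eq_lintegral_mul μ hh hmf
    _ = ∫⁻ x, (‖f x‖₊ : ℝ≥0∞) ^ 2 * h x ∂μ := by
        apply lintegral_congr
        intro x
        simp only [Pi.mul_apply]
        ring

lemma aesm_comp (hφ : Measurable φ) (hω : Measurable ω)
    (hrn : (μ.withDensity fun x => (‖ω x‖₊ : ℝ≥0∞) ^ 2).map φ = μ.withDensity h)
    (f : Lp ℂ 2 μ) :
    AEStronglyMeasurable (fun x => ω x * (f : X → ℂ) (φ x)) μ := by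
  set f' := (Lp.aestronglyMeasurable f).mk (f : X → ℂ) with hf'
  have hf'm : Measurable f' := (Lp.aestronglyMeasurable f).stronglyMeasurable_mk.measurable
  have hff' : (f : X → ℂ) =ᵐ[μ] f' := (Lp.aestronglyMeasurable f).ae_eq_mk
  have hmeas : Measurable fun x => ω x * f' (φ x) := hω.mul (hf'm.comp hφ)
  exact hmeas.aestronglyMeasurable.congr (ae_comp_congr hφ hω hrn hff'.symm)

lemma lintegral_comp_Lp (hφ : Measurable φ) (hω : Measurable ω) (hh : Measurable h)
    (hrn : (μ.withDensity fun x => (‖ω x‖₊ : ℝ≥0∞) ^ 2).map φ = μ.withDensity h)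
    (f : Lp ℂ 2 μ) :
    ∫⁻ x, (‖ω x * (f : X → ℂ) (φ x)‖₊ : ℝ≥0∞) ^ 2 ∂μ
      = ∫⁻ x, (‖(f : X → ℂ) x‖₊ : ℝ≥0∞) ^ 2 * h x ∂μ := by
  set f' := (Lp.aestronglyMeasurable f).mk (f : X → ℂ) with hf'
  have hf'm : Measurable f' := (Lp.aestronglyMeasurable f).stronglyMeasurable_mk.measurable
  have hff' : (f : X → ℂ) =ᵐ[μ] f' := (Lp.aestronglyMeasurable f).ae_eq_mk
  have e1 : ∫⁻ x, (‖ω x * (f : X → ℂ) (φ x)‖₊ : ℝ≥0∞) ^ 2 ∂μ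
      = ∫⁻ x, (‖ω x * f' (φ x)‖₊ : ℝ≥0∞) ^ 2 ∂μ :=
    lintegral_congr_ae ((ae_comp_congr hφ hω hrn hff').mono fun x hx => by
      dsimp only at hx ⊢
      rw [hx])
  have e2 : ∫⁻ x, (‖f' x‖₊ : ℝ≥0∞) ^ 2 * h x ∂μ
      = ∫⁻ x, (‖(f : X → ℂ) x‖₊ : ℝ≥0∞) ^ 2 * h x ∂μ :=
    lintegral_congr_ae (hff'.mono fun x hx => by
      dsimp only at hx ⊢
      rw [hx])
  rw [e1, lintegral_comp_meas hφ hω hh hrn hf'm, e2]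

lemma memℒp_two_iff {g : X → ℂ} (hg : AEStronglyMeasurable g μ) :
    MemLp g 2 μ ↔ ∫⁻ x, (‖g x‖₊ : ℝ≥0∞) ^ 2 ∂μ < ⊤ := by
  have hrw : ∀ x : X, (‖g x‖₊ : ℝ≥0∞) ^ ((2 : ℝ≥0∞).toReal) = (‖g x‖₊ : ℝ≥0∞) ^ (2 : ℕ) := by
    intro x
    rw [ENNReal.toReal_ofNat, ← ENNReal.rpow_natCast]
    norm_num
  constructor
  · rintro ⟨-, hlt⟩
    rw [eLpNorm_lt_top_iff_lintegral_rpow_enorm_lt_top two_ne_zero ENNReal.ofNat_ne_top] at hlt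
    simpa only [enorm_eq_nnnorm, hrw] using hlt
  · intro hlt
    refine ⟨hg, ?_⟩
    rw [eLpNorm_lt_top_iff_lintegral_rpow_enorm_lt_top two_ne_zero ENNReal.ofNat_ne_top]
    simpa only [enorm_eq_nnnorm, hrw] using hlt

lemma eLpNorm_two_eq (g : X → ℂ) :
    eLpNorm g 2 μ = (∫⁻ x, (‖g x‖₊ : ℝ≥0∞) ^ 2 ∂μ) ^ (1 / 2 : ℝ) := by
  rw [eLpNorm_eq_lintegral_rpow_enorm_toReal two_ne_zero ENNReal.ofNat_ne_top]
  have hrw : ∀ x : X, (‖g x‖₊ : ℝ≥0∞) ^ ((2 : ℝ≥0∞).toReal) = (‖g x‖₊ : ℝ≥0∞) ^ (2 : ℕ) := by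
    intro x
    rw [ENNReal.toReal_ofNat, ← ENNReal.rpow_natCast]
    norm_num
  simp only [enorm_eq_nnnorm, hrw, ENNReal.toReal_ofNat]
  norm_num

/-- The weighted composition operator is closed. -/
lemma comp_isClosed (hφ : Measurable φ) (hω : Measurable ω)
    (hrn : (μ.withDensity fun x => (‖ω x‖₊ : ℝ≥0∞) ^ 2).map φ = μ.withDensity h)
    (C : Lp ℂ 2 μ →ₗ.[ℂ] Lp ℂ 2 μ)
    (hCdom : ∀ f : Lp ℂ 2 μ, f ∈ C.domain ↔ MemLp (fun x => ω x * f (φ x)) 2 μ)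
    (hCval : ∀ (f : Lp ℂ 2 μ) (hf : f ∈ C.domain),
      (C ⟨f, hf⟩ : X → ℂ) =ᵐ[μ] fun x => ω x * f (φ x)) :
    C.IsClosed := by
  unfold LinearPMap.IsClosed
  apply IsSeqClosed.isClosed
  intro x p hx hxp
  have h1 : Filter.Tendsto (fun n => (x n).1) Filter.atTop (nhds p.1) :=
    (continuous_fst.tendsto p).comp hxp
  have h2 : Filter.Tendsto (fun n => (x n).2) Filter.atTop (nhds p.2) :=
    (continuous_snd.tendsto p).comp hxp
  have hLp1 := (Lp.tendsto_Lp_iff_tendsto_eLpNorm' (fun n => (x n).1) p.1).mp h1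
  have hLp2 := (Lp.tendsto_Lp_iff_tendsto_eLpNorm' (fun n => (x n).2) p.2).mp h2
  have hm1 : TendstoInMeasure μ (fun n => ((x n).1 : X → ℂ)) Filter.atTop (p.1 : X → ℂ) :=
    tendstoInMeasure_of_tendsto_eLpNorm two_ne_zero
      (fun n => Lp.aestronglyMeasurable _) (Lp.aestronglyMeasurable _) hLp1
  have hm2 : TendstoInMeasure μ (fun n => ((x n).2 : X → ℂ)) Filter.atTop (p.2 : X → ℂ) :=
    tendstoInMeasure_of_tendsto_eLpNorm two_ne_zero
      (fun n => Lp.aestronglyMeasurable _) (Lp.aestronglyMeasurable _) hLp2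
  obtain ⟨ns, hns, hae1⟩ := hm1.exists_seq_tendsto_ae
  have hm2ns : TendstoInMeasure μ (fun i => ((x (ns i)).2 : X → ℂ)) Filter.atTop
      (p.2 : X → ℂ) := fun ε hε => (hm2 ε hε).comp hns.tendsto_atTop
  obtain ⟨ms, hms, hae2⟩ := hm2ns.exists_seq_tendsto_ae
  set k : ℕ → ℕ := fun i => ns (ms i) with hk
  have hae1' : ∀ᵐ y ∂μ,
      Filter.Tendsto (fun i => ((x (k i)).1 : X → ℂ) y) Filter.atTop (nhds ((p.1 : X → ℂ) y)) :=
    hae1.mono fun y hy => hy.comp hms.tendsto_atTop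
  -- graph data
  have hxg : ∀ n, ∃ hn : (x n).1 ∈ C.domain, C ⟨(x n).1, hn⟩ = (x n).2 := by
    intro n
    have hxn := hx n
    rw [SetLike.mem_coe, LinearPMap.mem_graph_iff] at hxn
    obtain ⟨v, hv1, hv2⟩ := hxn
    have hn : (x n).1 ∈ C.domain := by rw [← hv1]; exact v.2
    refine ⟨hn, ?_⟩
    have : (⟨(x n).1, hn⟩ : C.domain) = v := Subtype.ext hv1.symm
    rw [this, hv2]
  have hval : ∀ n, ((x n).2 : X → ℂ) =ᵐ[μ] fun y => ω y * ((x n).1 : X → ℂ) (φ y) := by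
    intro n
    obtain ⟨hn, he⟩ := hxg n
    rw [← he]
    exact hCval _ hn
  -- transfer the null set of non-convergence
  obtain ⟨N, hsub, hNm, hN0⟩ := exists_measurable_superset_of_null (ae_iff.mp hae1')
  have hωz := ae_omega_zero hφ hω hrn hNm hN0
  have key : (p.2 : X → ℂ) =ᵐ[μ] fun y => ω y * (p.1 : X → ℂ) (φ y) := by
    filter_upwards [hae2, hωz, MeasureTheory.ae_all_iff.mpr fun i => hval (k i)]
      with y hy2 hyω hyval
    by_cases hc : φ y ∈ N
    · have hω0 : ω y = 0 := hyω hc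
      have hzero : Filter.Tendsto (fun i => ((x (k i)).2 : X → ℂ) y) Filter.atTop (nhds 0) := by
        have hfun : (fun i => ((x (k i)).2 : X → ℂ) y) = fun _ => (0 : ℂ) :=
          funext fun i => by rw [hyval i, hω0, zero_mul]
        rw [hfun]
        exact tendsto_const_nhds
      have := tendsto_nhds_unique hy2 hzero
      rw [this, hω0, zero_mul]
    · have hconv : Filter.Tendsto (fun i => ((x (k i)).1 : X → ℂ) (φ y)) Filter.atTop
          (nhds ((p.1 : X → ℂ) (φ y))) := by
        by_contra hne
        exact hc (hsub hne)
      have hlim : Filter.Tendsto (fun i => ((x (k i)).2 : X → ℂ) y) Filter.atTop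
          (nhds (ω y * (p.1 : X → ℂ) (φ y))) := by
        have hmul := hconv.const_mul (ω y)
        have hfun : (fun i => ((x (k i)).2 : X → ℂ) y)
            = fun i => ω y * ((x (k i)).1 : X → ℂ) (φ y) := funext fun i => hyval i
        rw [hfun]
        exact hmul
      exact tendsto_nhds_unique hy2 hlim
  have hmem : MemLp (fun y => ω y * (p.1 : X → ℂ) (φ y)) 2 μ := (Lp.memLp p.2).ae_eq key
  have hp1 : p.1 ∈ C.domain := (hCdom p.1).mpr hmem
  have hfin : C ⟨p.1, hp1⟩ = p.2 := Lp.ext ((hCval p.1 hp1).trans key.symm)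
  rw [SetLike.mem_coe, LinearPMap.mem_graph_iff]
  exact ⟨⟨p.1, hp1⟩, rfl, hfin⟩


/-- Density of a set containing all `f` with finite weighted integrals. -/
lemma dense_of_lintegral {h₁ h₂ : X → ℝ≥0∞} (hh₁ : Measurable h₁) (hh₂ : Measurable h₂)
    (hfin₁ : ∀ᵐ x ∂μ, h₁ x < ⊤) (hfin₂ : ∀ᵐ x ∂μ, h₂ x < ⊤)
    (D : Set (Lp ℂ 2 μ))
    (hD : ∀ f : Lp ℂ 2 μ,
      (∫⁻ x, (‖(f : X → ℂ) x‖₊ : ℝ≥0∞) ^ 2 * h₁ x ∂μ < ⊤ ∧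
       ∫⁻ x, (‖(f : X → ℂ) x‖₊ : ℝ≥0∞) ^ 2 * h₂ x ∂μ < ⊤) → f ∈ D) :
    Dense D := by
  intro f
  set f' := (Lp.aestronglyMeasurable f).mk (f : X → ℂ) with hf'def
  have hf'm : Measurable f' := (Lp.aestronglyMeasurable f).stronglyMeasurable_mk.measurable
  have hff' : (f : X → ℂ) =ᵐ[μ] f' := (Lp.aestronglyMeasurable f).ae_eq_mk
  have hmemf' : MemLp f' 2 μ := (Lp.memLp f).ae_eq hff'
  have hfL2 : ∫⁻ x, (‖f' x‖₊ : ℝ≥0∞) ^ 2 ∂μ < ⊤ :=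
    (memℒp_two_iff hmemf'.aestronglyMeasurable).mp hmemf'
  set E : ℕ → Set X := fun n => {x | h₁ x ≤ n ∧ h₂ x ≤ n} with hEdef
  have hEm : ∀ n, MeasurableSet (E n) := fun n =>
    MeasurableSet.inter (hh₁ measurableSet_Iic) (hh₂ measurableSet_Iic)
  have hmemn : ∀ n : ℕ, MemLp ((E n).indicator f') 2 μ := fun n => hmemf'.indicator (hEm n)
  set s : ℕ → Lp ℂ 2 μ := fun n => ((hmemn n).toLp _) with hsdef
  have hcoe : ∀ n, (s n : X → ℂ) =ᵐ[μ] (E n).indicator f' := fun n => (hmemn n).coeFn_toLp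
  have hsD : ∀ n, s n ∈ D := by
    intro n
    apply hD
    have key : ∀ hh : X → ℝ≥0∞, (∀ x ∈ E n, hh x ≤ (n : ℝ≥0∞)) →
        ∫⁻ x, (‖(s n : X → ℂ) x‖₊ : ℝ≥0∞) ^ 2 * hh x ∂μ < ⊤ := by
      intro hh hle
      have e0 : ∫⁻ x, (‖(s n : X → ℂ) x‖₊ : ℝ≥0∞) ^ 2 * hh x ∂μ
          = ∫⁻ x, (‖((E n).indicator f') x‖₊ : ℝ≥0∞) ^ 2 * hh x ∂μ :=
        lintegral_congr_ae ((hcoe n).mono fun x hx => by dsimp only; rw [hx])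
      rw [e0]
      have hle2 : ∀ x, (‖((E n).indicator f') x‖₊ : ℝ≥0∞) ^ 2 * hh x
          ≤ (n : ℝ≥0∞) * (‖f' x‖₊ : ℝ≥0∞) ^ 2 := by
        intro x
        by_cases hxE : x ∈ E n
        · rw [Set.indicator_of_mem hxE]
          calc (‖f' x‖₊ : ℝ≥0∞) ^ 2 * hh x ≤ (‖f' x‖₊ : ℝ≥0∞) ^ 2 * (n : ℝ≥0∞) :=
                mul_le_mul_right (hle x hxE) _
            _ = (n : ℝ≥0∞) * (‖f' x‖₊ : ℝ≥0∞) ^ 2 := mul_comm _ _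
        · rw [Set.indicator_of_notMem hxE]
          simp
      calc ∫⁻ x, (‖((E n).indicator f') x‖₊ : ℝ≥0∞) ^ 2 * hh x ∂μ
          ≤ ∫⁻ x, (n : ℝ≥0∞) * (‖f' x‖₊ : ℝ≥0∞) ^ 2 ∂μ := lintegral_mono hle2
        _ = (n : ℝ≥0∞) * ∫⁻ x, (‖f' x‖₊ : ℝ≥0∞) ^ 2 ∂μ :=
            lintegral_const_mul _ (hf'm.nnnorm.coe_nnreal_ennreal.pow_const 2)
        _ < ⊤ := ENNReal.mul_lt_top (ENNReal.natCast_lt_top n) hfL2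
    exact ⟨key h₁ fun x hx => hx.1, key h₂ fun x hx => hx.2⟩
  have hJ : Filter.Tendsto
      (fun n => ∫⁻ x, ((E n)ᶜ.indicator fun x => (‖f' x‖₊ : ℝ≥0∞) ^ 2) x ∂μ)
      Filter.atTop (nhds 0) := by
    have h0 : ∫⁻ _ : X, (0 : ℝ≥0∞) ∂μ = 0 := lintegral_zero
    refine h0 ▸ tendsto_lintegral_of_dominated_convergence (fun x => (‖f' x‖₊ : ℝ≥0∞) ^ 2)
      (fun n => (hf'm.nnnorm.coe_nnreal_ennreal.pow_const 2).indicator (hEm n).compl)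
      (fun n => Filter.Eventually.of_forall fun x => Set.indicator_le_self _ _ x)
      (ne_of_lt hfL2) ?_
    filter_upwards [hfin₁, hfin₂] with x hx1 hx2
    obtain ⟨n₁, hn₁⟩ := ENNReal.exists_nat_gt hx1.ne
    obtain ⟨n₂, hn₂⟩ := ENNReal.exists_nat_gt hx2.ne
    have hev : ∀ᶠ n in Filter.atTop,
        ((E n)ᶜ.indicator fun x => (‖f' x‖₊ : ℝ≥0∞) ^ 2) x = 0 := by
      rw [Filter.eventually_atTop]
      refine ⟨max n₁ n₂, fun n hn => ?_⟩
      have e1 : h₁ x ≤ (n : ℝ≥0∞) :=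
        le_of_lt (lt_of_lt_of_le hn₁ (Nat.cast_le.mpr (le_trans (le_max_left n₁ n₂) hn)))
      have e2 : h₂ x ≤ (n : ℝ≥0∞) :=
        le_of_lt (lt_of_lt_of_le hn₂ (Nat.cast_le.mpr (le_trans (le_max_right n₁ n₂) hn)))
      have hxE : x ∈ E n := ⟨e1, e2⟩
      exact Set.indicator_of_notMem (by simp [hxE]) _
    exact Filter.Tendsto.congr' (Filter.EventuallyEq.symm hev) tendsto_const_nhds
  have hsnorm : Filter.Tendsto (fun n => eLpNorm ((s n : X → ℂ) - (f : X → ℂ)) 2 μ)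
      Filter.atTop (nhds 0) := by
    have hcongr : ∀ n, eLpNorm ((s n : X → ℂ) - (f : X → ℂ)) 2 μ
        = eLpNorm ((E n)ᶜ.indicator f') 2 μ := by
      intro n
      calc eLpNorm ((s n : X → ℂ) - (f : X → ℂ)) 2 μ
          = eLpNorm (-((E n)ᶜ.indicator f')) 2 μ := by
            apply eLpNorm_congr_ae
            filter_upwards [hcoe n, hff'] with x hx1 hx2
            rw [Pi.sub_apply, hx1, hx2, Pi.neg_apply]
            by_cases hxE : x ∈ E n
            · rw [Set.indicator_of_mem hxE, Set.indicator_of_notMem (by simp [hxE]),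
                sub_self, neg_zero]
            · rw [Set.indicator_of_notMem hxE, Set.indicator_of_mem (by simp [hxE]), zero_sub]
        _ = eLpNorm ((E n)ᶜ.indicator f') 2 μ := eLpNorm_neg _ _ _
    have hfunext : (fun n => eLpNorm ((s n : X → ℂ) - (f : X → ℂ)) 2 μ)
        = fun n => (∫⁻ x, ((E n)ᶜ.indicator fun x => (‖f' x‖₊ : ℝ≥0∞) ^ 2) x ∂μ) ^ (1/2 : ℝ) := by
      funext n
      rw [hcongr n, eLpNorm_two_eq]
      congr 1
      apply lintegral_congr
      intro x
      by_cases hxE : x ∈ (E n)ᶜ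
      · rw [Set.indicator_of_mem hxE, Set.indicator_of_mem hxE]
      · rw [Set.indicator_of_notMem hxE, Set.indicator_of_notMem hxE]
        simp
    rw [hfunext]
    have hc := (ENNReal.continuous_rpow_const (y := (1/2 : ℝ))).tendsto 0
    have := hc.comp hJ
    have h0 : (0 : ℝ≥0∞) ^ (1/2 : ℝ) = 0 := ENNReal.zero_rpow_of_pos (by norm_num)
    rw [h0] at this
    exact this
  have htend : Filter.Tendsto s Filter.atTop (nhds f) :=
    (Lp.tendsto_Lp_iff_tendsto_eLpNorm' s f).mpr hsnorm
  exact mem_closure_of_tendsto htend (Filter.Eventually.of_forall hsD)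

end Meas

end Prop31

end
local notation "⟪" x ", " y "⟫" => @inner ℂ _ _ x y

/-- **Proposition 3.1(iv)**: let `T` be the column operator
`f ↦ (C_{φ₁,ω₁}f, C_{φ₂,ω₂}f)` from `L²(μ)` to `L²(μ) ⊕ L²(μ)` and `R` the row
operator `(f₁,f₂) ↦ C_{φ₁,ω₁}*f₁ + C_{φ₂,ω₂}*f₂` from `L²(μ) ⊕ L²(μ)` to `L²(μ)`,
where `C_{φᵢ,ωᵢ}*` is the Hilbert-space adjoint.  Then `T` and `R` are densely
defined, `R` is closable, and `T* = closure of R`. -/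
theorem stmt_3
    {X : Type*} [MeasurableSpace X] (μ : Measure X) [SigmaFinite μ]
    (φ₁ φ₂ : X → X) (ω₁ ω₂ : X → ℂ)
    (hφ₁ : Measurable φ₁) (hφ₂ : Measurable φ₂)
    (hω₁ : Measurable ω₁) (hω₂ : Measurable ω₂)
    (h₁ h₂ : X → ℝ≥0∞) (hh₁ : Measurable h₁) (hh₂ : Measurable h₂)
    -- `C_{φᵢ,ωᵢ}` is well defined with Radon–Nikodym derivative `hᵢ`
    (hrn₁ : (μ.withDensity fun x => (‖ω₁ x‖₊ : ℝ≥0∞) ^ 2).map φ₁ = μ.withDensity h₁)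
    (hrn₂ : (μ.withDensity fun x => (‖ω₂ x‖₊ : ℝ≥0∞) ^ 2).map φ₂ = μ.withDensity h₂)
    -- `C_{φᵢ,ωᵢ}` is densely defined, i.e. `hᵢ < ∞` a.e. `[μ]`
    (hfin₁ : ∀ᵐ x ∂μ, h₁ x < ⊤) (hfin₂ : ∀ᵐ x ∂μ, h₂ x < ⊤)
    -- `C₁`, `C₂` are the weighted composition operators `C_{φᵢ,ωᵢ}` in `L²(μ)`
    (C₁ C₂ : Lp ℂ 2 μ →ₗ.[ℂ] Lp ℂ 2 μ)
    (hC₁dom : ∀ f : Lp ℂ 2 μ, f ∈ C₁.domain ↔ MemLp (fun x => ω₁ x * f (φ₁ x)) 2 μ)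
    (hC₂dom : ∀ f : Lp ℂ 2 μ, f ∈ C₂.domain ↔ MemLp (fun x => ω₂ x * f (φ₂ x)) 2 μ)
    (hC₁val : ∀ (f : Lp ℂ 2 μ) (hf : f ∈ C₁.domain),
      (C₁ ⟨f, hf⟩ : X → ℂ) =ᵐ[μ] fun x => ω₁ x * f (φ₁ x))
    (hC₂val : ∀ (f : Lp ℂ 2 μ) (hf : f ∈ C₂.domain),
      (C₂ ⟨f, hf⟩ : X → ℂ) =ᵐ[μ] fun x => ω₂ x * f (φ₂ x))
    -- `T` is the column operator
    (T : Lp ℂ 2 μ →ₗ.[ℂ] WithLp 2 (Lp ℂ 2 μ × Lp ℂ 2 μ))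
    (hTdom : ∀ f : Lp ℂ 2 μ, f ∈ T.domain ↔
      (MemLp (fun x => ω₁ x * f (φ₁ x)) 2 μ ∧ MemLp (fun x => ω₂ x * f (φ₂ x)) 2 μ))
    (hTval : ∀ (f : Lp ℂ 2 μ) (hf : f ∈ T.domain),
      (((WithLp.equiv 2 (Lp ℂ 2 μ × Lp ℂ 2 μ)) (T ⟨f, hf⟩)).1 : X → ℂ)
          =ᵐ[μ] (fun x => ω₁ x * f (φ₁ x)) ∧
      (((WithLp.equiv 2 (Lp ℂ 2 μ × Lp ℂ 2 μ)) (T ⟨f, hf⟩)).2 : X → ℂ)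
          =ᵐ[μ] (fun x => ω₂ x * f (φ₂ x)))
    -- `R` is the row operator built from the adjoints `C₁*`, `C₂*`
    (R : WithLp 2 (Lp ℂ 2 μ × Lp ℂ 2 μ) →ₗ.[ℂ] Lp ℂ 2 μ)
    (hRdom : ∀ g : WithLp 2 (Lp ℂ 2 μ × Lp ℂ 2 μ), g ∈ R.domain ↔
      (((WithLp.equiv 2 (Lp ℂ 2 μ × Lp ℂ 2 μ)) g).1 ∈ C₁.adjoint.domain ∧
       ((WithLp.equiv 2 (Lp ℂ 2 μ × Lp ℂ 2 μ)) g).2 ∈ C₂.adjoint.domain))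
    (hRval : ∀ (g : WithLp 2 (Lp ℂ 2 μ × Lp ℂ 2 μ)) (hg : g ∈ R.domain)
      (hg₁ : ((WithLp.equiv 2 (Lp ℂ 2 μ × Lp ℂ 2 μ)) g).1 ∈ C₁.adjoint.domain)
      (hg₂ : ((WithLp.equiv 2 (Lp ℂ 2 μ × Lp ℂ 2 μ)) g).2 ∈ C₂.adjoint.domain),
      R ⟨g, hg⟩ = C₁.adjoint ⟨((WithLp.equiv 2 (Lp ℂ 2 μ × Lp ℂ 2 μ)) g).1, hg₁⟩ +
        C₂.adjoint ⟨((WithLp.equiv 2 (Lp ℂ 2 μ × Lp ℂ 2 μ)) g).2, hg₂⟩) :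
    Dense (T.domain : Set (Lp ℂ 2 μ)) ∧
    Dense (R.domain : Set (WithLp 2 (Lp ℂ 2 μ × Lp ℂ 2 μ))) ∧
    R.IsClosable ∧
    T.adjoint = R.closure := by
  classical
  -- Density of the domain of the column operator
  have hTd : Dense (T.domain : Set (Lp ℂ 2 μ)) := by
    apply Prop31.dense_of_lintegral hh₁ hh₂ hfin₁ hfin₂
    rintro f ⟨hf1, hf2⟩
    rw [SetLike.mem_coe, hTdom]
    constructor
    · rw [Prop31.memℒp_two_iff (Prop31.aesm_comp hφ₁ hω₁ hrn₁ f),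
        Prop31.lintegral_comp_Lp hφ₁ hω₁ hh₁ hrn₁ f]
      exact hf1
    · rw [Prop31.memℒp_two_iff (Prop31.aesm_comp hφ₂ hω₂ hrn₂ f),
        Prop31.lintegral_comp_Lp hφ₂ hω₂ hh₂ hrn₂ f]
      exact hf2
  have hC₁d : Dense (C₁.domain : Set (Lp ℂ 2 μ)) :=
    hTd.mono fun f hf => (hC₁dom f).mpr ((hTdom f).mp hf).1
  have hC₂d : Dense (C₂.domain : Set (Lp ℂ 2 μ)) :=
    hTd.mono fun f hf => (hC₂dom f).mpr ((hTdom f).mp hf).2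
  have hC₁c : C₁.IsClosed := Prop31.comp_isClosed hφ₁ hω₁ hrn₁ C₁ hC₁dom hC₁val
  have hC₂c : C₂.IsClosed := Prop31.comp_isClosed hφ₂ hω₂ hrn₂ C₂ hC₂dom hC₂val
  have hC₁ad : Dense (C₁.adjoint.domain : Set (Lp ℂ 2 μ)) := Prop31.adjoint_dense hC₁d hC₁c
  have hC₂ad : Dense (C₂.adjoint.domain : Set (Lp ℂ 2 μ)) := Prop31.adjoint_dense hC₂d hC₂c
  -- Density of the domain of the row operator
  have hRd : Dense (R.domain : Set (WithLp 2 (Lp ℂ 2 μ × Lp ℂ 2 μ))) := by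
    intro w
    obtain ⟨a, ha, hta⟩ := mem_closure_iff_seq_limit.mp (hC₁ad w.fst)
    obtain ⟨b, hb, htb⟩ := mem_closure_iff_seq_limit.mp (hC₂ad w.snd)
    set g : ℕ → WithLp 2 (Lp ℂ 2 μ × Lp ℂ 2 μ) :=
      fun n => (WithLp.equiv 2 (Lp ℂ 2 μ × Lp ℂ 2 μ)).symm (a n, b n) with hgdef
    have hgD : ∀ n, g n ∈ (R.domain : Set (WithLp 2 (Lp ℂ 2 μ × Lp ℂ 2 μ))) := by
      intro n
      rw [SetLike.mem_coe, hRdom]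
      exact ⟨ha n, hb n⟩
    have htg : Filter.Tendsto g Filter.atTop (nhds w) := by
      have h1 : Filter.Tendsto (fun n => (a n, b n)) Filter.atTop (nhds (w.fst, w.snd)) :=
        hta.prodMk_nhds htb
      have h2 := ((WithLp.prodContinuousLinearEquiv 2 ℂ (Lp ℂ 2 μ)
        (Lp ℂ 2 μ)).symm.continuous.tendsto _).comp h1
      exact h2
    exact mem_closure_of_tendsto htg (Filter.Eventually.of_forall hgD)
  -- T and R are formal adjoints of each other
  have hTfa : T.IsFormalAdjoint R := by
    intro x y
    obtain ⟨hy1, hy2⟩ := (hRdom y).mp y.2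
    obtain ⟨hx1m, hx2m⟩ := (hTdom (x : Lp ℂ 2 μ)).mp x.2
    have hx1 : (x : Lp ℂ 2 μ) ∈ C₁.domain := (hC₁dom _).mpr hx1m
    have hx2 : (x : Lp ℂ 2 μ) ∈ C₂.domain := (hC₂dom _).mpr hx2m
    have hT1 : (T x).fst = C₁ ⟨(x : Lp ℂ 2 μ), hx1⟩ :=
      Lp.ext ((hTval x x.2).1.trans (hC₁val x hx1).symm)
    have hT2 : (T x).snd = C₂ ⟨(x : Lp ℂ 2 μ), hx2⟩ :=
      Lp.ext ((hTval x x.2).2.trans (hC₂val x hx2).symm)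
    have hRy : R y = C₁.adjoint ⟨(y : WithLp 2 (Lp ℂ 2 μ × Lp ℂ 2 μ)).fst, hy1⟩ +
        C₂.adjoint ⟨(y : WithLp 2 (Lp ℂ 2 μ × Lp ℂ 2 μ)).snd, hy2⟩ := hRval y y.2 hy1 hy2
    have hfa1 := LinearPMap.adjoint_isFormalAdjoint hC₁d ⟨(y : WithLp 2 (Lp ℂ 2 μ × Lp ℂ 2 μ)).fst, hy1⟩
      ⟨(x : Lp ℂ 2 μ), hx1⟩
    have hfa2 := LinearPMap.adjoint_isFormalAdjoint hC₂d ⟨(y : WithLp 2 (Lp ℂ 2 μ × Lp ℂ 2 μ)).snd, hy2⟩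
      ⟨(x : Lp ℂ 2 μ), hx2⟩
    have hfa1' : ⟪C₁ ⟨(x : Lp ℂ 2 μ), hx1⟩, (y : WithLp 2 (Lp ℂ 2 μ × Lp ℂ 2 μ)).fst⟫
        = ⟪(x : Lp ℂ 2 μ), C₁.adjoint ⟨(y : WithLp 2 (Lp ℂ 2 μ × Lp ℂ 2 μ)).fst, hy1⟩⟫ := by
      have := congrArg (starRingEnd ℂ) hfa1
      rw [inner_conj_symm, inner_conj_symm] at this
      exact this.symm
    have hfa2' : ⟪C₂ ⟨(x : Lp ℂ 2 μ), hx2⟩, (y : WithLp 2 (Lp ℂ 2 μ × Lp ℂ 2 μ)).snd⟫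
        = ⟪(x : Lp ℂ 2 μ), C₂.adjoint ⟨(y : WithLp 2 (Lp ℂ 2 μ × Lp ℂ 2 μ)).snd, hy2⟩⟫ := by
      have := congrArg (starRingEnd ℂ) hfa2
      rw [inner_conj_symm, inner_conj_symm] at this
      exact this.symm
    calc ⟪T x, (y : WithLp 2 (Lp ℂ 2 μ × Lp ℂ 2 μ))⟫
        = ⟪(T x).fst, (y : WithLp 2 (Lp ℂ 2 μ × Lp ℂ 2 μ)).fst⟫ + ⟪(T x).snd, (y : WithLp 2 (Lp ℂ 2 μ × Lp ℂ 2 μ)).snd⟫ :=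
          WithLp.prod_inner_apply _ _
      _ = ⟪C₁ ⟨(x : Lp ℂ 2 μ), hx1⟩, (y : WithLp 2 (Lp ℂ 2 μ × Lp ℂ 2 μ)).fst⟫ +
          ⟪C₂ ⟨(x : Lp ℂ 2 μ), hx2⟩, (y : WithLp 2 (Lp ℂ 2 μ × Lp ℂ 2 μ)).snd⟫ := by rw [hT1, hT2]
      _ = ⟪(x : Lp ℂ 2 μ), C₁.adjoint ⟨(y : WithLp 2 (Lp ℂ 2 μ × Lp ℂ 2 μ)).fst, hy1⟩⟫ +
          ⟪(x : Lp ℂ 2 μ), C₂.adjoint ⟨(y : WithLp 2 (Lp ℂ 2 μ × Lp ℂ 2 μ)).snd, hy2⟩⟫ := by rw [hfa1', hfa2']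
      _ = ⟪(x : Lp ℂ 2 μ), C₁.adjoint ⟨(y : WithLp 2 (Lp ℂ 2 μ × Lp ℂ 2 μ)).fst, hy1⟩ +
          C₂.adjoint ⟨(y : WithLp 2 (Lp ℂ 2 μ × Lp ℂ 2 μ)).snd, hy2⟩⟫ := (inner_add_right _ _ _).symm
      _ = ⟪(x : Lp ℂ 2 μ), R y⟫ := by rw [hRy]
  have hRle : R ≤ T.adjoint := hTfa.le_adjoint hTd
  have hTadjc : T.adjoint.IsClosed := Prop31.adjoint_isClosed hTd
  have hRclosable : R.IsClosable := hTadjc.isClosable.leIsClosable hRle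
  -- key: the adjoint of R is contained in T
  have hkey : ∀ (f : Lp ℂ 2 μ) (hf : f ∈ R.adjoint.domain),
      ∃ hfT : f ∈ T.domain, T ⟨f, hfT⟩ = R.adjoint ⟨f, hf⟩ := by
    intro f hf
    set u := R.adjoint ⟨f, hf⟩ with hu
    have hfa := LinearPMap.adjoint_isFormalAdjoint hRd (⟨f, hf⟩ : R.adjoint.domain)
    have h1 : ∀ y1 : C₁.adjoint.domain, ⟪u.fst, (y1 : Lp ℂ 2 μ)⟫ = ⟪f, C₁.adjoint y1⟫ := by
      intro y1
      have hgd : ((WithLp.equiv 2 (Lp ℂ 2 μ × Lp ℂ 2 μ)).symm ((y1 : Lp ℂ 2 μ), 0)) ∈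
          R.domain := by
        rw [hRdom]
        exact ⟨y1.2, C₂.adjoint.domain.zero_mem⟩
      have hval := hfa ⟨_, hgd⟩
      have hz : C₂.adjoint ⟨(0 : Lp ℂ 2 μ), C₂.adjoint.domain.zero_mem⟩ = 0 :=
        LinearPMap.map_zero _
      have hRg : R ⟨_, hgd⟩ = C₁.adjoint ⟨(y1 : Lp ℂ 2 μ), y1.2⟩ +
          C₂.adjoint ⟨(0 : Lp ℂ 2 μ), C₂.adjoint.domain.zero_mem⟩ :=
        hRval _ hgd y1.2 C₂.adjoint.domain.zero_mem
      rw [hRg, hz, add_zero] at hval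
      have hval2 : ⟪u.fst, (y1 : Lp ℂ 2 μ)⟫ + ⟪u.snd, (0 : Lp ℂ 2 μ)⟫
          = ⟪f, C₁.adjoint ⟨(y1 : Lp ℂ 2 μ), y1.2⟩⟫ := hval
      rw [inner_zero_right, add_zero] at hval2
      have hy1eta : (⟨(y1 : Lp ℂ 2 μ), y1.2⟩ : C₁.adjoint.domain) = y1 := rfl
      rw [hy1eta] at hval2
      exact hval2
    have h2 : ∀ y2 : C₂.adjoint.domain, ⟪u.snd, (y2 : Lp ℂ 2 μ)⟫ = ⟪f, C₂.adjoint y2⟫ := by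
      intro y2
      have hgd : ((WithLp.equiv 2 (Lp ℂ 2 μ × Lp ℂ 2 μ)).symm (0, (y2 : Lp ℂ 2 μ))) ∈
          R.domain := by
        rw [hRdom]
        exact ⟨C₁.adjoint.domain.zero_mem, y2.2⟩
      have hval := hfa ⟨_, hgd⟩
      have hz : C₁.adjoint ⟨(0 : Lp ℂ 2 μ), C₁.adjoint.domain.zero_mem⟩ = 0 :=
        LinearPMap.map_zero _
      have hRg : R ⟨_, hgd⟩ = C₁.adjoint ⟨(0 : Lp ℂ 2 μ), C₁.adjoint.domain.zero_mem⟩ +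
          C₂.adjoint ⟨(y2 : Lp ℂ 2 μ), y2.2⟩ :=
        hRval _ hgd C₁.adjoint.domain.zero_mem y2.2
      rw [hRg, hz, zero_add] at hval
      have hval2 : ⟪u.fst, (0 : Lp ℂ 2 μ)⟫ + ⟪u.snd, (y2 : Lp ℂ 2 μ)⟫
          = ⟪f, C₂.adjoint ⟨(y2 : Lp ℂ 2 μ), y2.2⟩⟫ := hval
      rw [inner_zero_right, zero_add] at hval2
      have hy2eta : (⟨(y2 : Lp ℂ 2 μ), y2.2⟩ : C₂.adjoint.domain) = y2 := rfl
      rw [hy2eta] at hval2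
      exact hval2
    obtain ⟨hd1, he1⟩ := Prop31.adjoint_adjoint_le hC₁d hC₁c h1
    obtain ⟨hd2, he2⟩ := Prop31.adjoint_adjoint_le hC₂d hC₂c h2
    have hfT : f ∈ T.domain := (hTdom f).mpr ⟨(hC₁dom f).mp hd1, (hC₂dom f).mp hd2⟩
    refine ⟨hfT, ?_⟩
    have c1 : ((WithLp.equiv 2 (Lp ℂ 2 μ × Lp ℂ 2 μ)) (T ⟨f, hfT⟩)).1 = u.fst :=
      (Lp.ext ((hTval f hfT).1.trans (hC₁val f hd1).symm)).trans he1
    have c2 : ((WithLp.equiv 2 (Lp ℂ 2 μ × Lp ℂ 2 μ)) (T ⟨f, hfT⟩)).2 = u.snd :=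
      (Lp.ext ((hTval f hfT).2.trans (hC₂val f hd2).symm)).trans he2
    have : (WithLp.equiv 2 (Lp ℂ 2 μ × Lp ℂ 2 μ)) (T ⟨f, hfT⟩)
        = (WithLp.equiv 2 (Lp ℂ 2 μ × Lp ℂ 2 μ)) u := Prod.ext c1 c2
    exact (WithLp.equiv 2 (Lp ℂ 2 μ × Lp ℂ 2 μ)).injective this
  -- the two graphs coincide
  have hgraph : T.adjoint.graph = R.closure.graph := by
    rw [← hRclosable.graph_closure_eq_closure_graph]
    apply le_antisymm
    · intro q hq
      obtain ⟨y, z⟩ := q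
      have hq' := (Prop31.mem_graph_adjoint hTd).mp hq
      apply Prop31.mem_closure_graph_of_orth
      intro v hv
      obtain ⟨hud, hua⟩ := Prop31.mem_orth_graphL2 hRd hv
      obtain ⟨hfT, hTu⟩ := hkey v.snd hud
      rw [WithLp.prod_inner_apply, WithLp.ofLp_fst, WithLp.ofLp_snd, WithLp.ofLp_fst, WithLp.ofLp_snd]
      have hfst : ((WithLp.equiv 2 _).symm (y, z)).fst = y := rfl
      have hsnd : ((WithLp.equiv 2 _).symm (y, z)).snd = z := rfl
      rw [hfst, hsnd]
      have hq2 := hq' ⟨v.snd, hfT⟩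
      rw [hTu, hua] at hq2
      have hq2' : ⟪z, v.snd⟫ = ⟪y, -v.fst⟫ := hq2
      have hz2 : ⟪v.snd, z⟫ = ⟪-v.fst, y⟫ := by
        have := congrArg (starRingEnd ℂ) hq2'
        rw [inner_conj_symm, inner_conj_symm] at this
        exact this
      rw [hz2, inner_neg_left]
      ring
    · apply Submodule.topologicalClosure_minimal
      · exact LinearPMap.le_graph_of_le hRle
      · exact hTadjc
  exact ⟨hTd, hRd, hRclosable, LinearPMap.eq_of_eq_graph hgraph⟩
end

section
/- (Theorem 3.5(i)) For every f ∈ L²(μ): (a) ω₁·(f∘φ₁) ∈ L²(μ) and ω₂·(f∘φ₂) ∈ L²(μ) if and only if √(h₁+h₂)·f ∈ L²(μ); and (b) for every f in this common domain, ∫ |ω₁|²·|f∘φ₁|² dμ + ∫ |ω₂|²·|f∘φ₂|² dμ = ∫ (h₁+h₂)·|f|² dμ. (Consequently the modulus |𝐂| of the column operator 𝐂f = (C_{φ₁,ω₁}f, C_{φ₂,ω₂}f) is the multiplication operator by √(h₁+h₂).) -/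
open MeasureTheory
open scoped ENNReal NNReal

lemma keyA {X : Type*} [MeasurableSpace X] (μ : Measure X)
    (φ : X → X) (ω : X → ℂ) (hφ : Measurable φ) (hω : Measurable ω)
    (h : X → ℝ≥0∞) (hh : Measurable h)
    (hrn : (μ.withDensity fun x => (‖ω x‖₊ : ℝ≥0∞) ^ 2).map φ = μ.withDensity h)
    (g : X → ℝ≥0∞) (hg : Measurable g) :
    ∫⁻ x, (‖ω x‖₊ : ℝ≥0∞) ^ 2 * g (φ x) ∂μ = ∫⁻ x, h x * g x ∂μ := by
  have hw : Measurable fun x => (‖ω x‖₊ : ℝ≥0∞) ^ 2 := (hω.nnnorm.coe_nnreal_ennreal).pow_const 2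
  calc ∫⁻ x, (‖ω x‖₊ : ℝ≥0∞) ^ 2 * g (φ x) ∂μ
      = ∫⁻ x, g (φ x) ∂(μ.withDensity fun x => (‖ω x‖₊ : ℝ≥0∞) ^ 2) :=
        (lintegral_withDensity_eq_lintegral_mul μ hw (hg.comp hφ)).symm
    _ = ∫⁻ y, g y ∂((μ.withDensity fun x => (‖ω x‖₊ : ℝ≥0∞) ^ 2).map φ) :=
        (lintegral_map hg hφ).symm
    _ = ∫⁻ y, g y ∂(μ.withDensity h) := by rw [hrn]
    _ = ∫⁻ y, h y * g y ∂μ := lintegral_withDensity_eq_lintegral_mul μ hh hg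

lemma keyB {X : Type*} [MeasurableSpace X] (μ : Measure X)
    (φ : X → X) (ω : X → ℂ) (hφ : Measurable φ) (hω : Measurable ω)
    (h : X → ℝ≥0∞)
    (hrn : (μ.withDensity fun x => (‖ω x‖₊ : ℝ≥0∞) ^ 2).map φ = μ.withDensity h)
    {f f' : X → ℂ} (hff' : f =ᵐ[μ] f') :
    (fun x => ω x * f (φ x)) =ᵐ[μ] (fun x => ω x * f' (φ x)) := by
  obtain ⟨N, hNsub, hNmeas, hNnull⟩ := exists_measurable_superset_of_null hff'
  have h1 : (μ.withDensity fun x => (‖ω x‖₊ : ℝ≥0∞) ^ 2) (φ ⁻¹' N) = 0 := by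
    have : ((μ.withDensity fun x => (‖ω x‖₊ : ℝ≥0∞) ^ 2).map φ) N = 0 := by
      rw [hrn, withDensity_apply _ hNmeas, setLIntegral_measure_zero _ _ hNnull]
    rwa [Measure.map_apply hφ hNmeas] at this
  rw [withDensity_apply _ (hφ hNmeas)] at h1
  have hw : Measurable fun x => (‖ω x‖₊ : ℝ≥0∞) ^ 2 := (hω.nnnorm.coe_nnreal_ennreal).pow_const 2
  have h3 : ∀ᵐ x ∂μ, x ∈ φ ⁻¹' N → (‖ω x‖₊ : ℝ≥0∞) ^ 2 = 0 :=
    (ae_restrict_iff' (hφ hNmeas)).mp ((lintegral_eq_zero_iff hw).mp h1)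
  filter_upwards [h3] with x hx
  by_cases hmem : φ x ∈ N
  · have : ω x = 0 := by simpa using hx hmem
    simp [this]
  · have : f (φ x) = f' (φ x) := by
      by_contra hne
      exact hmem (hNsub hne)
    rw [this]

lemma memLp_iff_lintegral {X : Type*} [MeasurableSpace X] {μ : Measure X}
    {g : X → ℂ} (hg : AEStronglyMeasurable g μ) :
    MemLp g 2 μ ↔ ∫⁻ x, (‖g x‖₊ : ℝ≥0∞) ^ 2 ∂μ < ⊤ := by
  rw [MemLp, and_iff_right hg,
    eLpNorm_lt_top_iff_lintegral_rpow_enorm_lt_top (by norm_num) (by norm_num)]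
  norm_num [enorm_eq_nnnorm]

/-- **Theorem 3.5(i)**: for every `f ∈ L²(μ)`, (a) `ω₁·(f∘φ₁) ∈ L²(μ)` and
`ω₂·(f∘φ₂) ∈ L²(μ)` iff `√(h₁+h₂)·f ∈ L²(μ)`, and (b) for every `f` in this common
domain, `∫|ω₁|²|f∘φ₁|² dμ + ∫|ω₂|²|f∘φ₂|² dμ = ∫ (h₁+h₂)|f|² dμ`; consequently the
modulus `|𝐂|` of the column operator is multiplication by `√(h₁+h₂)`. -/
theorem stmt_6
    {X : Type*} [MeasurableSpace X] (μ : Measure X) [SigmaFinite μ]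
    (φ₁ φ₂ : X → X) (ω₁ ω₂ : X → ℂ)
    (hφ₁ : Measurable φ₁) (hφ₂ : Measurable φ₂)
    (hω₁ : Measurable ω₁) (hω₂ : Measurable ω₂)
    (h₁ h₂ : X → ℝ≥0∞) (hh₁ : Measurable h₁) (hh₂ : Measurable h₂)
    -- `C_{φᵢ,ωᵢ}` is well defined with Radon–Nikodym derivative `hᵢ`
    (hrn₁ : (μ.withDensity fun x => (‖ω₁ x‖₊ : ℝ≥0∞) ^ 2).map φ₁ = μ.withDensity h₁)
    (hrn₂ : (μ.withDensity fun x => (‖ω₂ x‖₊ : ℝ≥0∞) ^ 2).map φ₂ = μ.withDensity h₂)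
    -- `C_{φᵢ,ωᵢ}` is densely defined, i.e. `hᵢ < ∞` a.e. `[μ]`
    (hfin₁ : ∀ᵐ x ∂μ, h₁ x < ⊤) (hfin₂ : ∀ᵐ x ∂μ, h₂ x < ⊤) :
    ∀ f : X → ℂ, MemLp f 2 μ →
      ((MemLp (fun x => ω₁ x * f (φ₁ x)) 2 μ ∧ MemLp (fun x => ω₂ x * f (φ₂ x)) 2 μ) ↔
        MemLp (fun x => (Real.sqrt ((h₁ x + h₂ x).toReal) : ℂ) * f x) 2 μ) ∧
      (MemLp (fun x => ω₁ x * f (φ₁ x)) 2 μ → MemLp (fun x => ω₂ x * f (φ₂ x)) 2 μ →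
        (∫⁻ x, (‖ω₁ x‖₊ : ℝ≥0∞) ^ 2 * (‖f (φ₁ x)‖₊ : ℝ≥0∞) ^ 2 ∂μ) +
          (∫⁻ x, (‖ω₂ x‖₊ : ℝ≥0∞) ^ 2 * (‖f (φ₂ x)‖₊ : ℝ≥0∞) ^ 2 ∂μ) =
        ∫⁻ x, (h₁ x + h₂ x) * (‖f x‖₊ : ℝ≥0∞) ^ 2 ∂μ) := by
  intro f hf
  set f' := hf.1.mk f with hf'def
  have hff' : f =ᵐ[μ] f' := hf.1.ae_eq_mk
  have hf'm : Measurable f' := hf.1.stronglyMeasurable_mk.measurable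
  set g : X → ℝ≥0∞ := fun x => (‖f' x‖₊ : ℝ≥0∞) ^ 2 with hgdef
  have hg : Measurable g := (hf'm.nnnorm.coe_nnreal_ennreal).pow_const 2
  have aeq₁ := keyB μ φ₁ ω₁ hφ₁ hω₁ h₁ hrn₁ hff'
  have aeq₂ := keyB μ φ₂ ω₂ hφ₂ hω₂ h₂ hrn₂ hff'
  have E₁ : ∫⁻ x, (‖ω₁ x‖₊ : ℝ≥0∞) ^ 2 * (‖f (φ₁ x)‖₊ : ℝ≥0∞) ^ 2 ∂μ
      = ∫⁻ x, h₁ x * g x ∂μ := by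
    rw [← keyA μ φ₁ ω₁ hφ₁ hω₁ h₁ hh₁ hrn₁ g hg]
    refine lintegral_congr_ae ?_
    filter_upwards [aeq₁] with x hx
    have : (‖ω₁ x * f (φ₁ x)‖₊ : ℝ≥0∞) ^ 2 = (‖ω₁ x * f' (φ₁ x)‖₊ : ℝ≥0∞) ^ 2 := by rw [hx]
    simpa [nnnorm_mul, ENNReal.coe_mul, mul_pow, g] using this
  have E₂ : ∫⁻ x, (‖ω₂ x‖₊ : ℝ≥0∞) ^ 2 * (‖f (φ₂ x)‖₊ : ℝ≥0∞) ^ 2 ∂μ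
      = ∫⁻ x, h₂ x * g x ∂μ := by
    rw [← keyA μ φ₂ ω₂ hφ₂ hω₂ h₂ hh₂ hrn₂ g hg]
    refine lintegral_congr_ae ?_
    filter_upwards [aeq₂] with x hx
    have : (‖ω₂ x * f (φ₂ x)‖₊ : ℝ≥0∞) ^ 2 = (‖ω₂ x * f' (φ₂ x)‖₊ : ℝ≥0∞) ^ 2 := by rw [hx]
    simpa [nnnorm_mul, ENNReal.coe_mul, mul_pow, g] using this
  have F : ∫⁻ x, (h₁ x + h₂ x) * (‖f x‖₊ : ℝ≥0∞) ^ 2 ∂μ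
      = (∫⁻ x, h₁ x * g x ∂μ) + ∫⁻ x, h₂ x * g x ∂μ := by
    have step : ∫⁻ x, (h₁ x + h₂ x) * (‖f x‖₊ : ℝ≥0∞) ^ 2 ∂μ
        = ∫⁻ x, (h₁ x * g x + h₂ x * g x) ∂μ := by
      refine lintegral_congr_ae ?_
      filter_upwards [hff'] with x hx
      rw [hx]
      simp [g, add_mul]
    rw [step, lintegral_add_left (show Measurable fun x => h₁ x * g x from hh₁.mul hg)]
  have K : ∫⁻ x, (‖(Real.sqrt ((h₁ x + h₂ x).toReal) : ℂ) * f x‖₊ : ℝ≥0∞) ^ 2 ∂μ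
      = ∫⁻ x, (h₁ x + h₂ x) * (‖f x‖₊ : ℝ≥0∞) ^ 2 ∂μ := by
    refine lintegral_congr_ae ?_
    filter_upwards [hfin₁, hfin₂] with x hx1 hx2
    have hne : h₁ x + h₂ x ≠ ⊤ := by
      simp [ENNReal.add_ne_top, hx1.ne, hx2.ne]
    rw [nnnorm_mul, ENNReal.coe_mul, mul_pow]
    congr 1
    have e1 : (‖(Real.sqrt ((h₁ x + h₂ x).toReal) : ℂ)‖₊ : ℝ≥0∞)
        = ENNReal.ofReal (Real.sqrt ((h₁ x + h₂ x).toReal)) := by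
      rw [Complex.nnnorm_real]
      exact Real.enorm_eq_ofReal (Real.sqrt_nonneg _)
    rw [e1, ← ENNReal.ofReal_pow (Real.sqrt_nonneg _), Real.sq_sqrt ENNReal.toReal_nonneg,
      ENNReal.ofReal_toReal hne]
  have A₁ : AEStronglyMeasurable (fun x => ω₁ x * f (φ₁ x)) μ :=
    ((hω₁.mul (hf'm.comp hφ₁)).aestronglyMeasurable).congr aeq₁.symm
  have A₂ : AEStronglyMeasurable (fun x => ω₂ x * f (φ₂ x)) μ :=
    ((hω₂.mul (hf'm.comp hφ₂)).aestronglyMeasurable).congr aeq₂.symm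
  have A₃ : AEStronglyMeasurable (fun x => (Real.sqrt ((h₁ x + h₂ x).toReal) : ℂ) * f x) μ :=
    ((Complex.measurable_ofReal.comp
      (Real.continuous_sqrt.measurable.comp
        (hh₁.add hh₂).ennreal_toReal)).aestronglyMeasurable).mul hf.1
  have M₁ : MemLp (fun x => ω₁ x * f (φ₁ x)) 2 μ ↔ ∫⁻ x, h₁ x * g x ∂μ < ⊤ := by
    rw [memLp_iff_lintegral A₁]
    have : ∫⁻ x, (‖ω₁ x * f (φ₁ x)‖₊ : ℝ≥0∞) ^ 2 ∂μ
        = ∫⁻ x, (‖ω₁ x‖₊ : ℝ≥0∞) ^ 2 * (‖f (φ₁ x)‖₊ : ℝ≥0∞) ^ 2 ∂μ := by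
      simp [nnnorm_mul, ENNReal.coe_mul, mul_pow]
    rw [this, E₁]
  have M₂ : MemLp (fun x => ω₂ x * f (φ₂ x)) 2 μ ↔ ∫⁻ x, h₂ x * g x ∂μ < ⊤ := by
    rw [memLp_iff_lintegral A₂]
    have : ∫⁻ x, (‖ω₂ x * f (φ₂ x)‖₊ : ℝ≥0∞) ^ 2 ∂μ
        = ∫⁻ x, (‖ω₂ x‖₊ : ℝ≥0∞) ^ 2 * (‖f (φ₂ x)‖₊ : ℝ≥0∞) ^ 2 ∂μ := by
      simp [nnnorm_mul, ENNReal.coe_mul, mul_pow]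
    rw [this, E₂]
  have M₃ : MemLp (fun x => (Real.sqrt ((h₁ x + h₂ x).toReal) : ℂ) * f x) 2 μ ↔
      (∫⁻ x, h₁ x * g x ∂μ) + (∫⁻ x, h₂ x * g x ∂μ) < ⊤ := by
    rw [memLp_iff_lintegral A₃, K, F]
  constructor
  · rw [M₁, M₂, M₃, ENNReal.add_lt_top]
  · intro _ _
    rw [E₁, E₂, F]
end

section
/- (Theorem 3.5(ii), well-definedness of the partial-isometry weights) For i = 1,2, the set {x ∈ X : ωᵢ(x) ≠ 0 and (h₁+h₂)(φᵢ(x)) = 0} has μ-measure zero. -/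
open MeasureTheory
open scoped ENNReal NNReal


lemma aux_null {X : Type*} [MeasurableSpace X] (μ : Measure X)
    (φ : X → X) (ω : X → ℂ) (hφ : Measurable φ) (hω : Measurable ω)
    (hd h₁ h₂ : X → ℝ≥0∞) (hh₁ : Measurable h₁) (hh₂ : Measurable h₂)
    (hle : ∀ y, hd y ≤ h₁ y + h₂ y)
    (hrn : (μ.withDensity fun x => (‖ω x‖₊ : ℝ≥0∞) ^ 2).map φ = μ.withDensity hd) :
    μ {x | ω x ≠ 0 ∧ h₁ (φ x) + h₂ (φ x) = 0} = 0 := by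
  set w : X → ℝ≥0∞ := fun x => (‖ω x‖₊ : ℝ≥0∞) ^ 2 with hw
  have hwmeas : Measurable w := (hω.nnnorm.coe_nnreal_ennreal.pow_const 2)
  set E : Set X := {y | h₁ y + h₂ y = 0} with hEdef
  have hE : MeasurableSet E := (hh₁.add hh₂) (measurableSet_singleton 0)
  have hzero : (μ.withDensity hd) E = 0 := by
    rw [withDensity_apply _ hE]
    have : ∀ y ∈ E, hd y = 0 := fun y hy =>
      le_antisymm ((hle y).trans_eq hy) zero_le
    calc ∫⁻ y in E, hd y ∂μ = ∫⁻ _ in E, 0 ∂μ := setLIntegral_congr_fun hE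
            this
      _ = 0 := lintegral_zero
  have hpre : (μ.withDensity w) (φ ⁻¹' E) = 0 := by
    rw [← Measure.map_apply hφ hE, hrn]; exact hzero
  rw [withDensity_apply _ (hφ hE)] at hpre
  have h0 : w =ᵐ[μ.restrict (φ ⁻¹' E)] 0 :=
    (lintegral_eq_zero_iff hwmeas).mp hpre
  have : (μ.restrict (φ ⁻¹' E)) {x | w x ≠ 0} = 0 := by
    exact ae_iff.mp h0
  have hns : MeasurableSet {x | w x ≠ 0} := by
    exact hwmeas (measurableSet_singleton 0).compl
  rw [Measure.restrict_apply hns] at this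
  have hsub : {x | ω x ≠ 0 ∧ h₁ (φ x) + h₂ (φ x) = 0} ⊆ {x | w x ≠ 0} ∩ φ ⁻¹' E := by
    rintro x ⟨hx1, hx2⟩
    refine ⟨?_, hx2⟩
    simp [hw, pow_eq_zero_iff, hx1]
  exact measure_mono_null hsub this


/-- **Theorem 3.5(ii), well-definedness of the partial-isometry weights**: for
`i = 1,2`, the set `{x : ωᵢ(x) ≠ 0 and (h₁+h₂)(φᵢ(x)) = 0}` is `μ`-null. -/
theorem stmt_7
    {X : Type*} [MeasurableSpace X] (μ : Measure X) [SigmaFinite μ]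
    (φ₁ φ₂ : X → X) (ω₁ ω₂ : X → ℂ)
    (hφ₁ : Measurable φ₁) (hφ₂ : Measurable φ₂)
    (hω₁ : Measurable ω₁) (hω₂ : Measurable ω₂)
    (h₁ h₂ : X → ℝ≥0∞) (hh₁ : Measurable h₁) (hh₂ : Measurable h₂)
    -- `C_{φᵢ,ωᵢ}` is well defined with Radon–Nikodym derivative `hᵢ`
    (hrn₁ : (μ.withDensity fun x => (‖ω₁ x‖₊ : ℝ≥0∞) ^ 2).map φ₁ = μ.withDensity h₁)
    (hrn₂ : (μ.withDensity fun x => (‖ω₂ x‖₊ : ℝ≥0∞) ^ 2).map φ₂ = μ.withDensity h₂)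
    -- `C_{φᵢ,ωᵢ}` is densely defined, i.e. `hᵢ < ∞` a.e. `[μ]`
    (hfin₁ : ∀ᵐ x ∂μ, h₁ x < ⊤) (hfin₂ : ∀ᵐ x ∂μ, h₂ x < ⊤) :
    μ {x | ω₁ x ≠ 0 ∧ h₁ (φ₁ x) + h₂ (φ₁ x) = 0} = 0 ∧
    μ {x | ω₂ x ≠ 0 ∧ h₁ (φ₂ x) + h₂ (φ₂ x) = 0} = 0 := by
  exact ⟨aux_null μ φ₁ ω₁ hφ₁ hω₁ h₁ h₁ h₂ hh₁ hh₂ (fun y => le_self_add) hrn₁,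
    aux_null μ φ₂ ω₂ hφ₂ hω₂ h₂ h₁ h₂ hh₁ hh₂ (fun y => le_add_self) hrn₂⟩
end

section
/- (Theorem 3.5(ii), Radon–Nikodym derivative of the partial-isometry components) For i = 1,2 define ω̃ᵢ(x) := ωᵢ(x)/√(h(φᵢ(x))) if ωᵢ(x) ≠ 0 and 0 < h(φᵢ(x)) < ∞, and ω̃ᵢ(x) := 0 otherwise. Then: (a) the pushforward of the measure dμ_{ω̃ᵢ} = |ω̃ᵢ|² dμ under φᵢ is absolutely continuous with respect to μ, so that C_{φᵢ,ω̃ᵢ} is well defined; (b) its Radon–Nikodym derivative satisfies h_{φᵢ,ω̃ᵢ} = (hᵢ/h)·χ_{{h > 0}} μ-a.e.; and (c) h_{φ₁,ω̃₁} + h_{φ₂,ω̃₂} = χ_{{h > 0}} μ-a.e., so in particular 0 ≤ h_{φᵢ,ω̃ᵢ} ≤ 1 μ-a.e. and C_{φᵢ,ω̃ᵢ} is a bounded operator on L²(μ). -/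
open MeasureTheory
open scoped ENNReal NNReal

private lemma aux_map_withDensity {X : Type*} [MeasurableSpace X] (ν : Measure X)
    {φ : X → X} (hφ : Measurable φ) {g : X → ℝ≥0∞} (hg : Measurable g) :
    (ν.withDensity (fun x => g (φ x))).map φ = (ν.map φ).withDensity g := by
  ext s hs
  rw [Measure.map_apply hφ hs, withDensity_apply _ (hφ hs), withDensity_apply _ hs,
    setLIntegral_map hs hg hφ]

private lemma aux_key {X : Type*} [MeasurableSpace X] (μ : Measure X)
    {φ : X → X} {ω : X → ℂ} (hφ : Measurable φ) (hω : Measurable ω)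
    {h hi : X → ℝ≥0∞} (hh : Measurable h) (hhi : Measurable hi)
    (hrn : (μ.withDensity fun x => (‖ω x‖₊ : ℝ≥0∞) ^ 2).map φ = μ.withDensity hi)
    {tω : X → ℂ}
    (htω : ∀ x, tω x = if ω x ≠ 0 ∧ 0 < h (φ x) ∧ h (φ x) < ⊤ then
        ω x / (Real.sqrt ((h (φ x)).toReal) : ℂ) else 0) :
    (μ.withDensity fun x => (‖tω x‖₊ : ℝ≥0∞) ^ 2).map φ =
      μ.withDensity (fun x => if 0 < h x then hi x / h x else 0) := by
  set g : X → ℝ≥0∞ := fun y => if 0 < h y ∧ h y < ⊤ then (h y)⁻¹ else 0 with hg_def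
  have hgset : MeasurableSet {y | 0 < h y ∧ h y < ⊤} := hh measurableSet_Ioo
  have hg : Measurable g := Measurable.ite hgset hh.inv measurable_const
  have hw : (fun x => (‖tω x‖₊ : ℝ≥0∞) ^ 2) =
      fun x => (‖ω x‖₊ : ℝ≥0∞) ^ 2 * g (φ x) := by
    funext x
    rw [htω x]
    by_cases hc : ω x ≠ 0 ∧ 0 < h (φ x) ∧ h (φ x) < ⊤
    · rw [if_pos hc]
      obtain ⟨hω0, hpos, hlt⟩ := hc
      have ht0 : 0 < (h (φ x)).toReal := ENNReal.toReal_pos hpos.ne' hlt.ne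
      have hs0 : (0:ℝ) < Real.sqrt ((h (φ x)).toReal) := Real.sqrt_pos.2 ht0
      have e1 : (‖ω x / (Real.sqrt ((h (φ x)).toReal) : ℂ)‖₊ : ℝ≥0) ^ 2
          = ‖ω x‖₊ ^ 2 / ((h (φ x)).toReal.toNNReal) := by
        apply NNReal.coe_injective
        push_cast
        rw [norm_div, Complex.norm_real, Real.norm_eq_abs, abs_of_nonneg hs0.le,
          div_pow, Real.sq_sqrt ht0.le, Real.coe_toNNReal _ ht0.le]
      have hb : ((h (φ x)).toReal.toNNReal) ≠ 0 := (Real.toNNReal_pos.2 ht0).ne'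
      have e2 : (((h (φ x)).toReal.toNNReal : ℝ≥0∞)) = h (φ x) := by
        rw [← ENNReal.ofReal, ENNReal.ofReal_toReal hlt.ne]
      calc ((‖ω x / (Real.sqrt ((h (φ x)).toReal) : ℂ)‖₊ : ℝ≥0∞)) ^ 2
          = ((‖ω x / (Real.sqrt ((h (φ x)).toReal) : ℂ)‖₊ ^ 2 : ℝ≥0) : ℝ≥0∞) := by
            rw [ENNReal.coe_pow]
        _ = ((‖ω x‖₊ ^ 2 / ((h (φ x)).toReal.toNNReal) : ℝ≥0) : ℝ≥0∞) := by rw [e1]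
        _ = (‖ω x‖₊ : ℝ≥0∞) ^ 2 / (((h (φ x)).toReal.toNNReal : ℝ≥0∞)) := by
            rw [ENNReal.coe_div hb, ENNReal.coe_pow]
        _ = (‖ω x‖₊ : ℝ≥0∞) ^ 2 * g (φ x) := by
            rw [e2, hg_def]
            simp only [if_pos (And.intro hpos hlt)]
            rw [div_eq_mul_inv]
    · rw [if_neg hc]
      push_neg at hc
      by_cases hω0 : ω x = 0
      · simp [hω0]
      · have : ¬ (0 < h (φ x) ∧ h (φ x) < ⊤) := by
          intro hcon; exact absurd (hc hω0 hcon.1) (not_le.2 hcon.2)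
        simp [hg_def, this]
  have hω2 : Measurable fun x => (‖ω x‖₊ : ℝ≥0∞) ^ 2 :=
    (hω.nnnorm.coe_nnreal_ennreal).pow_const 2
  calc (μ.withDensity fun x => (‖tω x‖₊ : ℝ≥0∞) ^ 2).map φ
      = (μ.withDensity fun x => (‖ω x‖₊ : ℝ≥0∞) ^ 2 * g (φ x)).map φ := by rw [hw]
    _ = ((μ.withDensity fun x => (‖ω x‖₊ : ℝ≥0∞) ^ 2).withDensity (fun x => g (φ x))).map φ := by
        congr 1
        exact withDensity_mul μ hω2 (hg.comp hφ)
    _ = (((μ.withDensity fun x => (‖ω x‖₊ : ℝ≥0∞) ^ 2).map φ)).withDensity g :=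
        aux_map_withDensity _ hφ hg
    _ = (μ.withDensity hi).withDensity g := by rw [hrn]
    _ = μ.withDensity (fun x => hi x * g x) := by
        exact (withDensity_mul μ hhi hg).symm
    _ = μ.withDensity (fun x => if 0 < h x then hi x / h x else 0) := by
        congr 1; funext x
        by_cases h0 : 0 < h x
        · rw [if_pos h0]
          by_cases hT : h x < ⊤
          · rw [hg_def]; simp only [if_pos (And.intro h0 hT)]; rw [div_eq_mul_inv]
          · have hTop : h x = ⊤ := by simpa [lt_top_iff_ne_top, not_not] using hT
            simp [hg_def, hTop]
        · have hz : h x = 0 := by simpa [pos_iff_ne_zero, not_not] using h0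
          simp [hg_def, hz, h0]

private lemma aux_eLpNorm_two {X : Type*} [MeasurableSpace X] (μ : Measure X) (F : X → ℂ) :
    eLpNorm F 2 μ = (∫⁻ x, (‖F x‖₊ : ℝ≥0∞) ^ 2 ∂μ) ^ (1/2 : ℝ) := by
  rw [eLpNorm_eq_lintegral_rpow_enorm_toReal (by norm_num) (by norm_num)]
  have h2 : ((2:ℝ≥0∞)).toReal = (2:ℝ) := by norm_num
  rw [h2]
  congr 1
  refine lintegral_congr fun x => ?_
  rw [← ENNReal.rpow_natCast (‖F x‖₊ : ℝ≥0∞) 2]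
  norm_num
  rfl

private lemma aux_bound {X : Type*} [MeasurableSpace X] (μ : Measure X)
    {φ : X → X} (hφ : Measurable φ) {tω : X → ℂ} (htm : Measurable tω)
    {d : X → ℝ≥0∞} (hd : Measurable d) (hd1 : ∀ x, d x ≤ 1)
    (hmap : (μ.withDensity fun x => (‖tω x‖₊ : ℝ≥0∞) ^ 2).map φ = μ.withDensity d)
    {f : X → ℂ} (hf : MemLp f 2 μ) :
    MemLp (fun x => tω x * f (φ x)) 2 μ ∧
      eLpNorm (fun x => tω x * f (φ x)) 2 μ ≤ eLpNorm f 2 μ := by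
  set w : X → ℝ≥0∞ := fun x => (‖tω x‖₊ : ℝ≥0∞) ^ 2 with hw_def
  have hw : Measurable w := (htm.nnnorm.coe_nnreal_ennreal).pow_const 2
  set g : X → ℂ := hf.1.mk f with hg_def
  have hgm : Measurable g := hf.1.stronglyMeasurable_mk.measurable
  have hfg : f =ᵐ[μ] g := hf.1.ae_eq_mk
  have h1 : f =ᵐ[(μ.withDensity w).map φ] g := by
    rw [hmap]; exact (withDensity_absolutelyContinuous μ d).ae_eq hfg
  have h2 : ∀ᵐ x ∂(μ.withDensity w), f (φ x) = g (φ x) :=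
    ae_of_ae_map hφ.aemeasurable h1
  rw [ae_withDensity_iff hw] at h2
  have heq : (fun x => tω x * f (φ x)) =ᵐ[μ] fun x => tω x * g (φ x) := by
    refine h2.mono fun x hx => ?_
    by_cases h0 : tω x = 0
    · simp [h0]
    · have : w x ≠ 0 := by
        simp only [hw_def, ne_eq, pow_eq_zero_iff, ENNReal.coe_eq_zero, nnnorm_eq_zero]
        simpa using h0
      show tω x * f (φ x) = tω x * g (φ x)
      rw [hx this]
  have hbound : ∫⁻ x, (‖tω x * g (φ x)‖₊ : ℝ≥0∞) ^ 2 ∂μ ≤ ∫⁻ x, (‖g x‖₊ : ℝ≥0∞) ^ 2 ∂μ := by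
    have hgφ : Measurable fun x => (‖g (φ x)‖₊ : ℝ≥0∞) ^ 2 :=
      (((hgm.comp hφ).nnnorm).coe_nnreal_ennreal).pow_const 2
    have hg2 : Measurable fun y => (‖g y‖₊ : ℝ≥0∞) ^ 2 :=
      ((hgm.nnnorm).coe_nnreal_ennreal).pow_const 2
    calc ∫⁻ x, (‖tω x * g (φ x)‖₊ : ℝ≥0∞) ^ 2 ∂μ
        = ∫⁻ x, w x * (‖g (φ x)‖₊ : ℝ≥0∞) ^ 2 ∂μ := by
          refine lintegral_congr fun x => ?_
          rw [hw_def]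
          rw [nnnorm_mul, ENNReal.coe_mul, mul_pow]
      _ = ∫⁻ x, (‖g (φ x)‖₊ : ℝ≥0∞) ^ 2 ∂(μ.withDensity w) := by
          rw [lintegral_withDensity_eq_lintegral_mul μ hw hgφ]; rfl
      _ = ∫⁻ y, (‖g y‖₊ : ℝ≥0∞) ^ 2 ∂((μ.withDensity w).map φ) := by
          rw [lintegral_map hg2 hφ]
      _ = ∫⁻ y, (‖g y‖₊ : ℝ≥0∞) ^ 2 ∂(μ.withDensity d) := by rw [hmap]
      _ = ∫⁻ y, d y * (‖g y‖₊ : ℝ≥0∞) ^ 2 ∂μ := by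
          rw [lintegral_withDensity_eq_lintegral_mul μ hd hg2]; rfl
      _ ≤ ∫⁻ y, (‖g y‖₊ : ℝ≥0∞) ^ 2 ∂μ := by
          refine lintegral_mono fun y => ?_
          calc d y * (‖g y‖₊ : ℝ≥0∞) ^ 2 ≤ 1 * (‖g y‖₊ : ℝ≥0∞) ^ 2 :=
                mul_le_mul_left (hd1 y) _
            _ = (‖g y‖₊ : ℝ≥0∞) ^ 2 := one_mul _
  have hle : eLpNorm (fun x => tω x * f (φ x)) 2 μ ≤ eLpNorm f 2 μ := by
    rw [eLpNorm_congr_ae heq, eLpNorm_congr_ae hfg, aux_eLpNorm_two, aux_eLpNorm_two]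
    exact ENNReal.rpow_le_rpow hbound (by norm_num)
  refine ⟨⟨?_, lt_of_le_of_lt hle hf.2⟩, hle⟩
  exact (Measurable.aestronglyMeasurable (htm.mul (hgm.comp hφ))).congr heq.symm

/-- **Theorem 3.5(ii)**: with `h := h₁ + h₂` and
`ω̃ᵢ := ωᵢ/√(h∘φᵢ)` on `{ωᵢ ≠ 0} ∩ {0 < h∘φᵢ < ∞}` (and `0` elsewhere):
(a) `C_{φᵢ,ω̃ᵢ}` is well defined; (b) its Radon–Nikodym derivative equals
`(hᵢ/h)·χ_{{h>0}}` a.e. `[μ]`; (c) `h_{φ₁,ω̃₁} + h_{φ₂,ω̃₂} = χ_{{h>0}}` a.e. `[μ]`,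
in particular `0 ≤ h_{φᵢ,ω̃ᵢ} ≤ 1` a.e. and `C_{φᵢ,ω̃ᵢ}` is a bounded operator on
`L²(μ)`. -/
theorem stmt_8
    {X : Type*} [MeasurableSpace X] (μ : Measure X) [SigmaFinite μ]
    (φ₁ φ₂ : X → X) (ω₁ ω₂ : X → ℂ)
    (hφ₁ : Measurable φ₁) (hφ₂ : Measurable φ₂)
    (hω₁ : Measurable ω₁) (hω₂ : Measurable ω₂)
    (h₁ h₂ : X → ℝ≥0∞) (hh₁ : Measurable h₁) (hh₂ : Measurable h₂)
    -- `C_{φᵢ,ωᵢ}` is well defined with Radon–Nikodym derivative `hᵢ`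
    (hrn₁ : (μ.withDensity fun x => (‖ω₁ x‖₊ : ℝ≥0∞) ^ 2).map φ₁ = μ.withDensity h₁)
    (hrn₂ : (μ.withDensity fun x => (‖ω₂ x‖₊ : ℝ≥0∞) ^ 2).map φ₂ = μ.withDensity h₂)
    -- `C_{φᵢ,ωᵢ}` is densely defined, i.e. `hᵢ < ∞` a.e. `[μ]`
    (hfin₁ : ∀ᵐ x ∂μ, h₁ x < ⊤) (hfin₂ : ∀ᵐ x ∂μ, h₂ x < ⊤)
    -- the partial-isometry weights `ω̃ᵢ`
    (tω₁ tω₂ : X → ℂ)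
    (htω₁ : ∀ x, tω₁ x =
      if ω₁ x ≠ 0 ∧ 0 < h₁ (φ₁ x) + h₂ (φ₁ x) ∧ h₁ (φ₁ x) + h₂ (φ₁ x) < ⊤ then
        ω₁ x / (Real.sqrt ((h₁ (φ₁ x) + h₂ (φ₁ x)).toReal) : ℂ) else 0)
    (htω₂ : ∀ x, tω₂ x =
      if ω₂ x ≠ 0 ∧ 0 < h₁ (φ₂ x) + h₂ (φ₂ x) ∧ h₁ (φ₂ x) + h₂ (φ₂ x) < ⊤ then
        ω₂ x / (Real.sqrt ((h₁ (φ₂ x) + h₂ (φ₂ x)).toReal) : ℂ) else 0) :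
    -- (a) well-definedness
    ((μ.withDensity fun x => (‖tω₁ x‖₊ : ℝ≥0∞) ^ 2).map φ₁ ≪ μ ∧
     (μ.withDensity fun x => (‖tω₂ x‖₊ : ℝ≥0∞) ^ 2).map φ₂ ≪ μ) ∧
    -- (b) the Radon–Nikodym derivatives are `(hᵢ/h)·χ_{{h>0}}`
    ((μ.withDensity fun x => (‖tω₁ x‖₊ : ℝ≥0∞) ^ 2).map φ₁ =
        μ.withDensity (fun x => if 0 < h₁ x + h₂ x then h₁ x / (h₁ x + h₂ x) else 0) ∧
     (μ.withDensity fun x => (‖tω₂ x‖₊ : ℝ≥0∞) ^ 2).map φ₂ =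
        μ.withDensity (fun x => if 0 < h₁ x + h₂ x then h₂ x / (h₁ x + h₂ x) else 0)) ∧
    -- (c) the derivatives sum to `χ_{{h>0}}`, are `≤ 1` a.e., and `C_{φᵢ,ω̃ᵢ}` is bounded
    (∀ k₁ k₂ : X → ℝ≥0∞,
      (μ.withDensity fun x => (‖tω₁ x‖₊ : ℝ≥0∞) ^ 2).map φ₁ = μ.withDensity k₁ →
      (μ.withDensity fun x => (‖tω₂ x‖₊ : ℝ≥0∞) ^ 2).map φ₂ = μ.withDensity k₂ →
      Measurable k₁ → Measurable k₂ →
        (∀ᵐ x ∂μ, k₁ x + k₂ x = if 0 < h₁ x + h₂ x then 1 else 0) ∧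
        (∀ᵐ x ∂μ, k₁ x ≤ 1) ∧ (∀ᵐ x ∂μ, k₂ x ≤ 1)) ∧
    (∀ f : X → ℂ, MemLp f 2 μ →
      (MemLp (fun x => tω₁ x * f (φ₁ x)) 2 μ ∧
        eLpNorm (fun x => tω₁ x * f (φ₁ x)) 2 μ ≤ eLpNorm f 2 μ) ∧
      (MemLp (fun x => tω₂ x * f (φ₂ x)) 2 μ ∧
        eLpNorm (fun x => tω₂ x * f (φ₂ x)) 2 μ ≤ eLpNorm f 2 μ)) := by

  have hh : Measurable fun x => h₁ x + h₂ x := hh₁.add hh₂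
  have key₁ : (μ.withDensity fun x => (‖tω₁ x‖₊ : ℝ≥0∞) ^ 2).map φ₁ =
      μ.withDensity (fun x => if 0 < h₁ x + h₂ x then h₁ x / (h₁ x + h₂ x) else 0) :=
    aux_key μ (h := fun x => h₁ x + h₂ x) hφ₁ hω₁ hh hh₁ hrn₁ htω₁
  have key₂ : (μ.withDensity fun x => (‖tω₂ x‖₊ : ℝ≥0∞) ^ 2).map φ₂ =
      μ.withDensity (fun x => if 0 < h₁ x + h₂ x then h₂ x / (h₁ x + h₂ x) else 0) :=
    aux_key μ (h := fun x => h₁ x + h₂ x) hφ₂ hω₂ hh hh₂ hrn₂ htω₂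
  have hd₁ : Measurable fun x => if 0 < h₁ x + h₂ x then h₁ x / (h₁ x + h₂ x) else 0 :=
    Measurable.ite (hh measurableSet_Ioi) (hh₁.div hh) measurable_const
  have hd₂ : Measurable fun x => if 0 < h₁ x + h₂ x then h₂ x / (h₁ x + h₂ x) else 0 :=
    Measurable.ite (hh measurableSet_Ioi) (hh₂.div hh) measurable_const
  have hd₁1 : ∀ x, (if 0 < h₁ x + h₂ x then h₁ x / (h₁ x + h₂ x) else 0) ≤ 1 := by
    intro x; split_ifs
    · exact le_trans (ENNReal.div_le_div_right le_self_add _) ENNReal.div_self_le_one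
    · exact zero_le_one
  have hd₂1 : ∀ x, (if 0 < h₁ x + h₂ x then h₂ x / (h₁ x + h₂ x) else 0) ≤ 1 := by
    intro x; split_ifs
    · exact le_trans (ENNReal.div_le_div_right le_add_self _) ENNReal.div_self_le_one
    · exact zero_le_one
  have hsqrtm : Measurable fun x : X => ((Real.sqrt ((h₁ x + h₂ x).toReal) : ℝ) : ℂ) :=
    Complex.measurable_ofReal.comp
      (Real.continuous_sqrt.measurable.comp (ENNReal.measurable_toReal.comp hh))
  have htm₁ : Measurable tω₁ := by
    have he : tω₁ = fun x => if ω₁ x ≠ 0 ∧ 0 < h₁ (φ₁ x) + h₂ (φ₁ x) ∧ h₁ (φ₁ x) + h₂ (φ₁ x) < ⊤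
        then ω₁ x / (Real.sqrt ((h₁ (φ₁ x) + h₂ (φ₁ x)).toReal) : ℂ) else 0 := funext htω₁
    rw [he]
    refine Measurable.ite ?_ (hω₁.div (hsqrtm.comp hφ₁)) measurable_const
    rw [Set.setOf_and]
    exact ((hω₁ (measurableSet_singleton 0)).compl).inter ((hh.comp hφ₁) measurableSet_Ioo)
  have htm₂ : Measurable tω₂ := by
    have he : tω₂ = fun x => if ω₂ x ≠ 0 ∧ 0 < h₁ (φ₂ x) + h₂ (φ₂ x) ∧ h₁ (φ₂ x) + h₂ (φ₂ x) < ⊤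
        then ω₂ x / (Real.sqrt ((h₁ (φ₂ x) + h₂ (φ₂ x)).toReal) : ℂ) else 0 := funext htω₂
    rw [he]
    refine Measurable.ite ?_ (hω₂.div (hsqrtm.comp hφ₂)) measurable_const
    rw [Set.setOf_and]
    exact ((hω₂ (measurableSet_singleton 0)).compl).inter ((hh.comp hφ₂) measurableSet_Ioo)
  refine ⟨⟨by rw [key₁]; exact withDensity_absolutelyContinuous μ _,
           by rw [key₂]; exact withDensity_absolutelyContinuous μ _⟩,
          ⟨key₁, key₂⟩, ?_, ?_⟩
  · intro k₁ k₂ hk₁ hk₂ hk₁m hk₂m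
    have e₁ : k₁ =ᵐ[μ] fun x => if 0 < h₁ x + h₂ x then h₁ x / (h₁ x + h₂ x) else 0 :=
      (withDensity_eq_iff_of_sigmaFinite hk₁m.aemeasurable hd₁.aemeasurable).1
        (hk₁.symm.trans key₁)
    have e₂ : k₂ =ᵐ[μ] fun x => if 0 < h₁ x + h₂ x then h₂ x / (h₁ x + h₂ x) else 0 :=
      (withDensity_eq_iff_of_sigmaFinite hk₂m.aemeasurable hd₂.aemeasurable).1
        (hk₂.symm.trans key₂)
    refine ⟨?_, ?_, ?_⟩
    · filter_upwards [e₁, e₂, hfin₁, hfin₂] with x he₁ he₂ hf1 hf2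
      rw [he₁, he₂]
      by_cases h0 : 0 < h₁ x + h₂ x
      · rw [if_pos h0, if_pos h0, if_pos h0, ENNReal.div_add_div_same,
          ENNReal.div_self h0.ne' (ENNReal.add_lt_top.2 ⟨hf1, hf2⟩).ne]
      · rw [if_neg h0, if_neg h0, if_neg h0, add_zero]
    · filter_upwards [e₁] with x he; rw [he]; exact hd₁1 x
    · filter_upwards [e₂] with x he; rw [he]; exact hd₂1 x
  · intro f hf
    exact ⟨aux_bound μ hφ₁ htm₁ hd₁ hd₁1 key₁ hf, aux_bound μ hφ₂ htm₂ hd₂ hd₂1 key₂ hf⟩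
end

section
/- (Lemma 4.2(i)) For each λ ∈ [0,1] and i = 1,2, the pushforward of the measure dμ_{ω_λ^i} = |ω_λ^i|² dμ under φᵢ is absolutely continuous with respect to μ; hence the weighted composition operator C_{φᵢ,ω_λ^i} is well defined. -/
open MeasureTheory
open scoped ENNReal NNReal

/-- The weight `ω_λ` of the λ-mean transform: `ω_λ = (s + λ(1-s))·ω` where
`s(x) = √(h(x)/h(φ(x)))` if `ω x ≠ 0`, `h x < ∞` and `0 < h (φ x) < ∞`, else `0`. -/
noncomputable def meanWeight {X : Type*} (φ : X → X) (ω : X → ℂ) (h : X → ℝ≥0∞)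
    (l : ℝ) (x : X) : ℂ :=
  let s : ℝ := if ω x ≠ 0 ∧ h x < ⊤ ∧ 0 < h (φ x) ∧ h (φ x) < ⊤ then
      Real.sqrt ((h x).toReal / (h (φ x)).toReal) else 0
  ((s + l * (1 - s) : ℝ) : ℂ) * ω x

lemma meanWeight_ac {X : Type*} [MeasurableSpace X] (μ : Measure X) (φ : X → X)
    (ω : X → ℂ) (h : X → ℝ≥0∞) (l : ℝ) (hφ : Measurable φ) (hω : Measurable ω)
    (g : X → ℝ≥0∞)
    (hrn : (μ.withDensity fun x => (‖ω x‖₊ : ℝ≥0∞) ^ 2).map φ = μ.withDensity g) :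
    (μ.withDensity fun x => (‖meanWeight φ ω h l x‖₊ : ℝ≥0∞) ^ 2).map φ ≪ μ := by
  refine Measure.AbsolutelyContinuous.mk fun E hE hμE => ?_
  have h0 : (μ.withDensity fun x => (‖ω x‖₊ : ℝ≥0∞) ^ 2) (φ ⁻¹' E) = 0 := by
    rw [← Measure.map_apply hφ hE, hrn]
    exact (withDensity_absolutelyContinuous μ g) hμE
  rw [withDensity_apply _ (hφ hE)] at h0
  have hmeas : Measurable fun x => (‖ω x‖₊ : ℝ≥0∞) ^ 2 := by
    exact (ENNReal.continuous_coe.measurable.comp hω.nnnorm).pow_const 2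
  have hz : ∀ᵐ x ∂μ.restrict (φ ⁻¹' E), (‖ω x‖₊ : ℝ≥0∞) ^ 2 = 0 :=
    (lintegral_eq_zero_iff hmeas).mp h0
  have hz' : (fun x => (‖meanWeight φ ω h l x‖₊ : ℝ≥0∞) ^ 2)
      =ᵐ[μ.restrict (φ ⁻¹' E)] 0 := by
    filter_upwards [hz] with x hx
    have hω0 : ω x = 0 := by simpa using hx
    simp [meanWeight, hω0]
  rw [Measure.map_apply hφ hE, withDensity_apply _ (hφ hE), lintegral_congr_ae hz']
  simp

/-- **Lemma 4.2(i)**: for each `λ ∈ [0,1]` and `i = 1,2`, the pushforward under `φᵢ`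
of the measure `|ω_λ^i|² dμ` is absolutely continuous with respect to `μ`; hence the
weighted composition operator `C_{φᵢ,ω_λ^i}` is well defined. -/
theorem stmt_9
    {X : Type*} [MeasurableSpace X] (μ : Measure X) [SigmaFinite μ]
    (φ₁ φ₂ : X → X) (ω₁ ω₂ : X → ℂ)
    (hφ₁ : Measurable φ₁) (hφ₂ : Measurable φ₂)
    (hω₁ : Measurable ω₁) (hω₂ : Measurable ω₂)
    (h₁ h₂ : X → ℝ≥0∞) (hh₁ : Measurable h₁) (hh₂ : Measurable h₂)
    -- `C_{φᵢ,ωᵢ}` is well defined with Radon–Nikodym derivative `hᵢ`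
    (hrn₁ : (μ.withDensity fun x => (‖ω₁ x‖₊ : ℝ≥0∞) ^ 2).map φ₁ = μ.withDensity h₁)
    (hrn₂ : (μ.withDensity fun x => (‖ω₂ x‖₊ : ℝ≥0∞) ^ 2).map φ₂ = μ.withDensity h₂)
    -- `C_{φᵢ,ωᵢ}` is densely defined, i.e. `hᵢ < ∞` a.e. `[μ]`
    (hfin₁ : ∀ᵐ x ∂μ, h₁ x < ⊤) (hfin₂ : ∀ᵐ x ∂μ, h₂ x < ⊤)
    (l : ℝ) (hl : l ∈ Set.Icc (0 : ℝ) 1) :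
    (μ.withDensity fun x =>
        (‖meanWeight φ₁ ω₁ (fun y => h₁ y + h₂ y) l x‖₊ : ℝ≥0∞) ^ 2).map φ₁ ≪ μ ∧
    (μ.withDensity fun x =>
        (‖meanWeight φ₂ ω₂ (fun y => h₁ y + h₂ y) l x‖₊ : ℝ≥0∞) ^ 2).map φ₂ ≪ μ := by
  exact ⟨meanWeight_ac μ φ₁ ω₁ _ l hφ₁ hω₁ h₁ hrn₁,
    meanWeight_ac μ φ₂ ω₂ _ l hφ₂ hω₂ h₂ hrn₂⟩
end

section
/- (Proposition 4.14) Fix λ ∈ (0,1). If the set {f ∈ L²(μ) : ω_λ¹·(f∘φ₁) ∈ L²(μ) and ω_λ²·(f∘φ₂) ∈ L²(μ)} (the domain of the λ-spherical mean transform of the pair) is dense in L²(μ), then for each i = 1,2 the set {f ∈ L²(μ) : ω̂_λ^i·(f∘φᵢ) ∈ L²(μ)} (the domain of the λ-mean transform of the single operator C_{φᵢ,ωᵢ}) is dense in L²(μ); in particular the toral λ-spherical mean transform (the pair of the two single λ-mean transforms) is densely defined. -/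
set_option linter.unusedSectionVars false
set_option linter.unusedVariables false


open MeasureTheory
open scoped ENNReal NNReal

namespace S11

variable {X : Type*} [MeasurableSpace X] {μ : Measure X}

/-- division helper -/
lemma ofReal_toReal_div {u v : ℝ≥0∞} (hu : u ≠ ⊤) (hv0 : v ≠ 0) (hv : v ≠ ⊤) :
    ENNReal.ofReal (u.toReal / v.toReal) = u * v⁻¹ := by
  rw [div_eq_mul_inv, ENNReal.ofReal_mul ENNReal.toReal_nonneg,
    ENNReal.ofReal_inv_of_pos (ENNReal.toReal_pos hv0 hv),
    ENNReal.ofReal_toReal hu, ENNReal.ofReal_toReal hv]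

lemma memℒp_two_iff {u : X → ℂ} (hu : AEStronglyMeasurable u μ) :
    MemLp u 2 μ ↔ ∫⁻ x, (‖u x‖₊ : ℝ≥0∞) ^ 2 ∂μ < ⊤ := by
  have h2 : ((2 : ℝ≥0∞).toReal) = (2 : ℝ) := by simp
  have hpow : ∀ y : ℝ≥0∞, y ^ (2 : ℝ) = y ^ (2 : ℕ) := fun y => by
    rw [← ENNReal.rpow_natCast]; norm_num
  constructor
  · intro h
    have := lintegral_rpow_enorm_lt_top_of_eLpNorm_lt_top (f := u) two_ne_zero
      ENNReal.ofNat_ne_top h.2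
    rw [h2] at this
    simpa only [hpow, enorm_eq_nnnorm] using this
  · intro h
    refine ⟨hu, ?_⟩
    rw [eLpNorm_lt_top_iff_lintegral_rpow_enorm_lt_top two_ne_zero ENNReal.ofNat_ne_top, h2]
    simpa only [hpow, enorm_eq_nnnorm] using h

lemma eLpNorm_two_eq (u : X → ℂ) :
    eLpNorm u 2 μ = (∫⁻ x, (‖u x‖₊ : ℝ≥0∞) ^ 2 ∂μ) ^ (1/2 : ℝ) := by
  rw [eLpNorm_eq_lintegral_rpow_enorm_toReal two_ne_zero ENNReal.ofNat_ne_top]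
  have h2 : ((2 : ℝ≥0∞).toReal) = (2 : ℝ) := by simp
  have hpow : ∀ y : ℝ≥0∞, y ^ (2 : ℝ) = y ^ (2 : ℕ) := fun y => by
    rw [← ENNReal.rpow_natCast]; norm_num
  rw [h2]
  simp only [hpow, enorm_eq_nnnorm]

noncomputable def sIf (φ : X → X) (ω : X → ℂ) (h : X → ℝ≥0∞) (x : X) : ℝ :=
  if ω x ≠ 0 ∧ h x < ⊤ ∧ 0 < h (φ x) ∧ h (φ x) < ⊤ then
    Real.sqrt ((h x).toReal / (h (φ x)).toReal) else 0

lemma meanWeight_eq (φ : X → X) (ω : X → ℂ) (h : X → ℝ≥0∞) (l : ℝ) (x : X) :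
    meanWeight φ ω h l x = ((sIf φ ω h x + l * (1 - sIf φ ω h x) : ℝ) : ℂ) * ω x := rfl

lemma sIf_nonneg (φ : X → X) (ω : X → ℂ) (h : X → ℝ≥0∞) (x : X) : 0 ≤ sIf φ ω h x := by
  unfold sIf; split
  · exact Real.sqrt_nonneg _
  · exact le_refl 0

lemma measurable_sIf {φ : X → X} {ω : X → ℂ} {h : X → ℝ≥0∞}
    (hφ : Measurable φ) (hω : Measurable ω) (hh : Measurable h) :
    Measurable (sIf φ ω h) := by
  unfold sIf
  refine Measurable.ite ?_ ?_ measurable_const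
  · refine MeasurableSet.inter ?_ (MeasurableSet.inter ?_ (MeasurableSet.inter ?_ ?_))
    · exact (hω (measurableSet_singleton 0)).compl
    · exact hh measurableSet_Iio
    · exact (hh.comp hφ) measurableSet_Ioi
    · exact (hh.comp hφ) measurableSet_Iio
  · exact (Measurable.div (hh.ennreal_toReal) ((hh.comp hφ).ennreal_toReal)).sqrt

lemma measurable_meanWeight {φ : X → X} {ω : X → ℂ} {h : X → ℝ≥0∞} {l : ℝ}
    (hφ : Measurable φ) (hω : Measurable ω) (hh : Measurable h) :
    Measurable (meanWeight φ ω h l) := by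
  have hs := measurable_sIf hφ hω hh
  have : Measurable fun x => ((sIf φ ω h x + l * (1 - sIf φ ω h x) : ℝ) : ℂ) :=
    Complex.measurable_ofReal.comp (hs.add (measurable_const.mul (measurable_const.sub hs)))
  exact this.mul hω

lemma meanWeight_nnnorm_sq (φ : X → X) (ω : X → ℂ) (h : X → ℝ≥0∞) (l : ℝ) (x : X) :
    ((‖meanWeight φ ω h l x‖₊ : ℝ≥0∞)) ^ 2 =
      ((‖(sIf φ ω h x + l * (1 - sIf φ ω h x) : ℝ)‖₊ : ℝ≥0∞)) ^ 2 *
        ((‖ω x‖₊ : ℝ≥0∞)) ^ 2 := by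
  rw [meanWeight_eq, nnnorm_mul]
  push_cast
  rw [mul_pow]
  norm_cast

lemma meanWeight_zero {φ : X → X} {ω : X → ℂ} {h : X → ℝ≥0∞} {l : ℝ} {x : X}
    (hx : ω x = 0) : meanWeight φ ω h l x = 0 := by
  rw [meanWeight_eq, hx, mul_zero]

variable [SigmaFinite μ]

lemma mapAC {φ : X → X} {ω : X → ℂ} {e : X → ℝ≥0∞}
    (hφ : Measurable φ) (hω : Measurable ω)
    (hrn : (μ.withDensity fun x => (‖ω x‖₊ : ℝ≥0∞) ^ 2).map φ = μ.withDensity e)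
    {d : X → ℝ≥0∞} (hd0 : ∀ x, ω x = 0 → d x = 0) :
    (μ.withDensity d).map φ ≪ μ := by
  refine Measure.AbsolutelyContinuous.mk fun E hE hμE => ?_
  rw [Measure.map_apply hφ hE, withDensity_apply _ (hφ hE)]
  have h0 : (μ.withDensity fun x => (‖ω x‖₊ : ℝ≥0∞) ^ 2) (φ ⁻¹' E) = 0 := by
    rw [← Measure.map_apply hφ hE, hrn]
    exact withDensity_absolutelyContinuous μ e hμE
  rw [withDensity_apply _ (hφ hE)] at h0
  have hρ0 : (fun x => (‖ω x‖₊ : ℝ≥0∞) ^ 2) =ᵐ[μ.restrict (φ ⁻¹' E)] 0 :=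
    (lintegral_eq_zero_iff (hω.nnnorm.coe_nnreal_ennreal.pow_const 2)).mp h0
  have hd : d =ᵐ[μ.restrict (φ ⁻¹' E)] 0 := by
    filter_upwards [hρ0] with x hx
    have hωx : ω x = 0 := by simpa using hx
    exact hd0 x hωx
  rw [lintegral_congr_ae hd]
  simp

lemma map_withDensity_comp (ν : Measure X) {φ : X → X} (hφ : Measurable φ)
    {G : X → ℝ≥0∞} (hG : Measurable G) :
    (ν.withDensity fun x => G (φ x)).map φ = (ν.map φ).withDensity G := by
  ext E hE
  rw [Measure.map_apply hφ hE, withDensity_apply _ hE, withDensity_apply _ (hφ hE),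
    setLIntegral_map hE hG hφ]

lemma ae_le_of_withDensity_le {f g : X → ℝ≥0∞} (hf : Measurable f)
    (h : μ.withDensity f ≤ μ.withDensity g) : f ≤ᵐ[μ] g := by
  refine ae_le_of_forall_setLIntegral_le_of_sigmaFinite₀ hf.aemeasurable fun s hs _ => ?_
  rw [← withDensity_apply _ hs, ← withDensity_apply _ hs]
  exact Measure.le_iff'.1 h s

lemma lintegral_comp_sq {φ : X → X} (hφ : Measurable φ) {w : X → ℂ} (hw : Measurable w)
    {g : X → ℂ} (hg : Measurable g) :
    ∫⁻ x, (‖w x * g (φ x)‖₊ : ℝ≥0∞) ^ 2 ∂μ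
      = ∫⁻ y, (‖g y‖₊ : ℝ≥0∞) ^ 2 ∂((μ.withDensity fun x => (‖w x‖₊ : ℝ≥0∞) ^ 2).map φ) := by
  have h2 : Measurable fun a => (‖g (φ a)‖₊ : ℝ≥0∞) ^ 2 := (hg.comp hφ).nnnorm.coe_nnreal_ennreal.pow_const 2
  rw [lintegral_map (hg.nnnorm.coe_nnreal_ennreal.pow_const 2) hφ,
    lintegral_withDensity_eq_lintegral_mul μ (hw.nnnorm.coe_nnreal_ennreal.pow_const 2) h2]
  refine lintegral_congr fun x => ?_
  simp only [Pi.mul_apply, nnnorm_mul]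
  push_cast
  ring

lemma ae_comp_congr {φ : X → X} (hφ : Measurable φ) {w : X → ℂ} (hw : Measurable w)
    (hAC : (μ.withDensity fun x => (‖w x‖₊ : ℝ≥0∞) ^ 2).map φ ≪ μ)
    {f g : X → ℂ} (hfg : f =ᵐ[μ] g) :
    (fun x => w x * f (φ x)) =ᵐ[μ] fun x => w x * g (φ x) := by
  set E := toMeasurable μ {x | f x ≠ g x} with hEdef
  have hEm : MeasurableSet E := measurableSet_toMeasurable _ _
  have hE0 : μ E = 0 := by rw [hEdef, measure_toMeasurable]; exact hfg
  have h1 : ((μ.withDensity fun x => (‖w x‖₊ : ℝ≥0∞) ^ 2).map φ) E = 0 := hAC hE0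
  rw [Measure.map_apply hφ hEm, withDensity_apply_eq_zero (hw.nnnorm.coe_nnreal_ennreal.pow_const 2)] at h1
  rw [Filter.EventuallyEq, Filter.eventually_iff, mem_ae_iff]
  refine measure_mono_null ?_ h1
  intro x hx
  simp only [Set.mem_compl_iff, Set.mem_setOf_eq] at hx
  have hwx : w x ≠ 0 := by
    intro h0; exact hx (by rw [h0, zero_mul, zero_mul])
  have hfgx : f (φ x) ≠ g (φ x) := fun h0 => hx (by rw [h0])
  refine ⟨?_, subset_toMeasurable _ _ hfgx⟩
  simp [hwx]

lemma memIff {φ : X → X} (hφ : Measurable φ) {w : X → ℂ} (hw : Measurable w)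
    {H : X → ℝ≥0∞} (hH : Measurable H)
    (heq : (μ.withDensity fun x => (‖w x‖₊ : ℝ≥0∞) ^ 2).map φ = μ.withDensity H)
    (f : Lp ℂ 2 μ) :
    MemLp (fun x => w x * f (φ x)) 2 μ ↔ ∫⁻ x, (‖f x‖₊ : ℝ≥0∞) ^ 2 * H x ∂μ < ⊤ := by
  obtain ⟨g, hgm, hfg⟩ : ∃ g : X → ℂ, Measurable g ∧ ⇑f =ᵐ[μ] g := by
    have h := (Lp.aestronglyMeasurable f).aemeasurable
    exact ⟨h.mk f, h.measurable_mk, h.ae_eq_mk⟩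
  have hAC : (μ.withDensity fun x => (‖w x‖₊ : ℝ≥0∞) ^ 2).map φ ≪ μ := by
    rw [heq]; exact withDensity_absolutelyContinuous μ H
  have hcong := ae_comp_congr hφ hw hAC hfg
  have hmeas : Measurable fun x => w x * g (φ x) := hw.mul (hgm.comp hφ)
  rw [memLp_congr_ae hcong, memℒp_two_iff hmeas.aestronglyMeasurable,
    lintegral_comp_sq hφ hw hgm, heq,
    lintegral_withDensity_eq_lintegral_mul μ hH (hgm.nnnorm.coe_nnreal_ennreal.pow_const 2)]
  have heq2 : ∫⁻ x, (H * fun y => (‖g y‖₊ : ℝ≥0∞) ^ 2) x ∂μ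
      = ∫⁻ x, (‖f x‖₊ : ℝ≥0∞) ^ 2 * H x ∂μ := by
    refine lintegral_congr_ae ?_
    filter_upwards [hfg] with x hx
    simp only [Pi.mul_apply, hx, mul_comm]
  rw [heq2]

lemma dense_of_ae_lt_top {H : X → ℝ≥0∞} (hH : Measurable H) (hfin : ∀ᵐ x ∂μ, H x < ⊤) :
    Dense {f : Lp ℂ 2 μ | ∫⁻ x, (‖f x‖₊ : ℝ≥0∞) ^ 2 * H x ∂μ < ⊤} := by
  intro f₀
  rw [Metric.mem_closure_iff]
  intro ε hε
  obtain ⟨g, hgm, hf₀g⟩ : ∃ g : X → ℂ, Measurable g ∧ ⇑f₀ =ᵐ[μ] g := by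
    have h := (Lp.aestronglyMeasurable f₀).aemeasurable
    exact ⟨h.mk f₀, h.measurable_mk, h.ae_eq_mk⟩
  have hg2 : MemLp g 2 μ := (Lp.memLp f₀).ae_eq hf₀g
  have hJ : ∫⁻ x, (‖g x‖₊ : ℝ≥0∞) ^ 2 ∂μ < ⊤ := (memℒp_two_iff hg2.1).mp hg2
  set A : ℕ → Set X := fun n => spanningSets μ n ∩ {x | H x ≤ n} with hA
  have hAm : ∀ n, MeasurableSet (A n) :=
    fun n => (measurableSet_spanningSets μ n).inter (hH measurableSet_Iic)
  have hmem : ∀ n, MemLp ((A n).indicator g) 2 μ := fun n => hg2.indicator (hAm n)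
  set I : ℕ → ℝ≥0∞ := fun n => ∫⁻ x, (‖g x - (A n).indicator g x‖₊ : ℝ≥0∞) ^ 2 ∂μ with hI
  have htend : Filter.Tendsto I Filter.atTop (nhds 0) := by
    have h0 : (0 : ℝ≥0∞) = ∫⁻ _x, 0 ∂μ := by simp
    rw [hI, h0]
    refine tendsto_lintegral_of_dominated_convergence (fun x => (‖g x‖₊ : ℝ≥0∞) ^ 2)
      (fun n => ((hgm.sub (hgm.indicator (hAm n))).nnnorm.coe_nnreal_ennreal.pow_const 2)) ?_ hJ.ne ?_
    · intro n
      refine Filter.Eventually.of_forall fun x => ?_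
      by_cases hx : x ∈ A n
      · simp [Set.indicator_of_mem hx]
      · simp [Set.indicator_of_notMem hx]
    · filter_upwards [hfin] with x hx
      obtain ⟨m, hm⟩ : ∃ m, x ∈ spanningSets μ m := by
        have := iUnion_spanningSets μ
        have hx' : x ∈ ⋃ i, spanningSets μ i := this ▸ Set.mem_univ x
        exact Set.mem_iUnion.mp hx'
      obtain ⟨k, hk⟩ : ∃ k : ℕ, H x ≤ k := by
        obtain ⟨k, hk⟩ := ENNReal.exists_nat_gt hx.ne
        exact ⟨k, hk.le⟩
      refine tendsto_atTop_of_eventually_const (i₀ := max m k) fun n hn => ?_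
      have hxA : x ∈ A n :=
        ⟨monotone_spanningSets μ (le_trans (le_max_left m k) hn) hm,
          le_trans hk (by exact_mod_cast Nat.cast_le.mpr (le_trans (le_max_right m k) hn))⟩
      simp [Set.indicator_of_mem hxA]
  set δ : ℝ≥0∞ := ENNReal.ofReal ε ^ (2 : ℝ) with hδdef
  have hδpos : 0 < δ := ENNReal.rpow_pos (ENNReal.ofReal_pos.mpr hε) ENNReal.ofReal_ne_top
  obtain ⟨n, hn⟩ := (htend.eventually (Iio_mem_nhds hδpos)).exists
  refine ⟨(hmem n).toLp _, ?_, ?_⟩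
  · -- membership
    show ∫⁻ x, (‖((hmem n).toLp _ : Lp ℂ 2 μ) x‖₊ : ℝ≥0∞) ^ 2 * H x ∂μ < ⊤
    have hcoe := MemLp.coeFn_toLp (hmem n)
    have heq : ∫⁻ x, (‖((hmem n).toLp _ : Lp ℂ 2 μ) x‖₊ : ℝ≥0∞) ^ 2 * H x ∂μ
        = ∫⁻ x, (‖(A n).indicator g x‖₊ : ℝ≥0∞) ^ 2 * H x ∂μ := by
      refine lintegral_congr_ae ?_
      filter_upwards [hcoe] with x hx
      rw [hx]
    rw [heq]
    have hb : ∀ x, (‖(A n).indicator g x‖₊ : ℝ≥0∞) ^ 2 * H x ≤ (‖g x‖₊ : ℝ≥0∞) ^ 2 * n := by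
      intro x
      by_cases hx : x ∈ A n
      · simp only [Set.indicator_of_mem hx]
        exact mul_le_mul_right hx.2 _
      · simp [Set.indicator_of_notMem hx]
    calc ∫⁻ x, (‖(A n).indicator g x‖₊ : ℝ≥0∞) ^ 2 * H x ∂μ
        ≤ ∫⁻ x, (‖g x‖₊ : ℝ≥0∞) ^ 2 * n ∂μ := lintegral_mono hb
      _ = (∫⁻ x, (‖g x‖₊ : ℝ≥0∞) ^ 2 ∂μ) * n := lintegral_mul_const _ (hgm.nnnorm.coe_nnreal_ennreal.pow_const 2)
      _ < ⊤ := ENNReal.mul_lt_top hJ (ENNReal.natCast_lt_top n)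
  · -- distance
    rw [Lp.dist_def]
    have hae : (⇑f₀ - ⇑((hmem n).toLp _)) =ᵐ[μ] fun x => g x - (A n).indicator g x := by
      filter_upwards [hf₀g, MemLp.coeFn_toLp (hmem n)] with x h1 h2
      simp [Pi.sub_apply, h1, h2]
    rw [eLpNorm_congr_ae hae, eLpNorm_two_eq]
    have hlt : (I n) ^ (1/2 : ℝ) < δ ^ (1/2 : ℝ) :=
      ENNReal.rpow_lt_rpow hn (by norm_num)
    have hδ2 : δ ^ (1/2 : ℝ) = ENNReal.ofReal ε := by
      rw [hδdef, ← ENNReal.rpow_mul]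
      norm_num
    rw [hδ2] at hlt
    exact ENNReal.toReal_lt_of_lt_ofReal hlt

lemma ae_lt_top_of_dense {H : X → ℝ≥0∞} (hH : Measurable H)
    (hd : Dense {f : Lp ℂ 2 μ | ∫⁻ x, (‖f x‖₊ : ℝ≥0∞) ^ 2 * H x ∂μ < ⊤}) :
    ∀ᵐ x ∂μ, H x < ⊤ := by
  by_contra hcon
  rw [ae_iff] at hcon
  have hTm : MeasurableSet {x | H x = ⊤} := hH (measurableSet_singleton ⊤)
  have hT : μ {x | H x = ⊤} ≠ 0 := by
    have : {a | ¬ H a < ⊤} = {x | H x = ⊤} := by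
      ext x; simp [lt_top_iff_ne_top]
    rwa [this] at hcon
  have hex : ∃ n, μ ({x | H x = ⊤} ∩ spanningSets μ n) ≠ 0 := by
    by_contra hall
    push_neg at hall
    refine hT ?_
    have hcover : {x | H x = ⊤} = ⋃ n, {x | H x = ⊤} ∩ spanningSets μ n := by
      rw [← Set.inter_iUnion, iUnion_spanningSets, Set.inter_univ]
    rw [hcover]
    exact measure_iUnion_null hall
  obtain ⟨n, hn⟩ := hex
  set E := {x | H x = ⊤} ∩ spanningSets μ n with hEdef
  have hEm : MeasurableSet E := hTm.inter (measurableSet_spanningSets μ n)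
  have hEfin : μ E ≠ ⊤ :=
    ((measure_mono Set.inter_subset_right).trans_lt (measure_spanningSets_lt_top μ n)).ne
  set χ : Lp ℂ 2 μ := indicatorConstLp 2 hEm hEfin (1 : ℂ) with hχdef
  have horth : {f : Lp ℂ 2 μ | ∫⁻ x, (‖f x‖₊ : ℝ≥0∞) ^ 2 * H x ∂μ < ⊤}
      ⊆ {f : Lp ℂ 2 μ | (inner ℂ χ f : ℂ) = 0} := by
    intro f hf
    have hres : ∫⁻ x in E, (‖f x‖₊ : ℝ≥0∞) ^ 2 * H x ∂μ < ⊤ :=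
      lt_of_le_of_lt (setLIntegral_le_lintegral _ _) hf
    have haem : AEMeasurable (fun x => (‖f x‖₊ : ℝ≥0∞) ^ 2 * H x) (μ.restrict E) :=
      (((Lp.aestronglyMeasurable f).aemeasurable.nnnorm.coe_nnreal_ennreal.pow_const 2).mul hH.aemeasurable).restrict
    have hlt : ∀ᵐ x ∂μ.restrict E, (‖f x‖₊ : ℝ≥0∞) ^ 2 * H x < ⊤ := ae_lt_top' haem hres.ne
    have hf0 : ∀ᵐ x ∂μ.restrict E, f x = 0 := by
      filter_upwards [hlt, ae_restrict_mem hEm] with x h1 h2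
      by_contra hfx
      have hne : ((‖f x‖₊ : ℝ≥0∞)) ^ 2 ≠ 0 := by
        simp [pow_eq_zero_iff, hfx]
      rw [h2.1, ENNReal.mul_top hne] at h1
      exact (lt_irrefl _ h1).elim
    have hf0' : ∀ᵐ x ∂μ, x ∈ E → f x = 0 := (ae_restrict_iff' hEm).mp hf0
    have hχcoe : ⇑χ =ᵐ[μ] E.indicator fun _ => (1 : ℂ) := indicatorConstLp_coeFn
    show (inner ℂ χ f : ℂ) = 0
    rw [L2.inner_def]
    have hint0 : (fun x => (inner ℂ (χ x) (f x) : ℂ)) =ᵐ[μ] fun _ => (0 : ℂ) := by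
      filter_upwards [hχcoe, hf0'] with x h1 h2
      rw [RCLike.inner_apply, h1]
      by_cases hx : x ∈ E
      · rw [h2 hx, zero_mul]
      · rw [Set.indicator_of_notMem hx]
        simp
    rw [integral_congr_ae hint0, integral_zero]
  have hclosed : IsClosed {f : Lp ℂ 2 μ | (inner ℂ χ f : ℂ) = 0} :=
    isClosed_eq (Continuous.inner continuous_const continuous_id) continuous_const
  have huniv : (Set.univ : Set (Lp ℂ 2 μ)) ⊆ {f : Lp ℂ 2 μ | (inner ℂ χ f : ℂ) = 0} := by
    rw [← hd.closure_eq]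
    exact closure_minimal horth hclosed
  have hχ0 : (inner ℂ χ χ : ℂ) = 0 := huniv (Set.mem_univ χ)
  have hχzero : χ = 0 := inner_self_eq_zero.mp hχ0
  have hnorm := norm_indicatorConstLp (μ := μ) (p := 2) (c := (1 : ℂ)) (s := E)
    two_ne_zero ENNReal.ofNat_ne_top (hs := hEm) (hμs := hEfin)
  rw [← hχdef, hχzero, norm_zero] at hnorm
  have hμE0 : (μ E).toReal = 0 := by
    have h2 : ((2 : ℝ≥0∞).toReal) = (2 : ℝ) := by simp
    rw [h2] at hnorm
    simp only [norm_one, one_mul] at hnorm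
    have := Real.rpow_eq_zero_iff_of_nonneg ENNReal.toReal_nonneg |>.mp hnorm.symm
    exact this.1
  rw [ENNReal.toReal_eq_zero_iff] at hμE0
  exact hn (hμE0.resolve_right hEfin)

lemma smul_mono_meas (c : ℝ≥0∞) {ν₁ ν₂ : Measure X} (h : ν₁ ≤ ν₂) : c • ν₁ ≤ c • ν₂ := by
  refine Measure.le_iff'.2 fun s => ?_
  simp only [Measure.smul_apply, smul_eq_mul]
  exact mul_le_mul_right (Measure.le_iff'.1 h s) c

lemma wd_mono_meas {ν₁ ν₂ : Measure X} (C : X → ℝ≥0∞) (h : ν₁ ≤ ν₂) :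
    ν₁.withDensity C ≤ ν₂.withDensity C := by
  refine Measure.le_iff.2 fun s hs => ?_
  rw [withDensity_apply _ hs, withDensity_apply _ hs]
  exact lintegral_mono' (Measure.restrict_mono (subset_refl s) h) le_rfl

lemma pt_up {φ : X → X} {ω : X → ℂ} {e : X → ℝ≥0∞} {l : ℝ}
    (hl : 0 < l) (hl1 : l < 1) (x : X) :
    (‖meanWeight φ ω e l x‖₊ : ℝ≥0∞) ^ 2 ≤
      ENNReal.ofReal (2 * l ^ 2) * (‖ω x‖₊ : ℝ≥0∞) ^ 2 +
      ENNReal.ofReal (2 * (1 - l) ^ 2) *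
        ((if 0 < e (φ x) ∧ e (φ x) < ⊤ then (e (φ x))⁻¹ else 0) *
          (e x * (‖ω x‖₊ : ℝ≥0∞) ^ 2)) := by
  rw [meanWeight_nnnorm_sq]
  set t : ℝ := sIf φ ω e x with htdef
  have ht0 : 0 ≤ t := sIf_nonneg φ ω e x
  set r : ℝ := t + l * (1 - t) with hrdef
  have hr0 : 0 ≤ r := by nlinarith
  have hcoe : ((‖r‖₊ : ℝ≥0∞)) ^ 2 = ENNReal.ofReal (r ^ 2) := by
    rw [← enorm_eq_nnnorm, Real.enorm_eq_ofReal hr0, ← ENNReal.ofReal_pow hr0]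
  have hr' : r = l + (1 - l) * t := by rw [hrdef]; ring
  have hkey : r ^ 2 ≤ 2 * l ^ 2 + 2 * (1 - l) ^ 2 * t ^ 2 := by
    rw [hr']; nlinarith [sq_nonneg (l - (1 - l) * t)]
  have hsub : ENNReal.ofReal (t ^ 2) * (‖ω x‖₊ : ℝ≥0∞) ^ 2 ≤
      (if 0 < e (φ x) ∧ e (φ x) < ⊤ then (e (φ x))⁻¹ else 0) *
        (e x * (‖ω x‖₊ : ℝ≥0∞) ^ 2) := by
    by_cases hcond : ω x ≠ 0 ∧ e x < ⊤ ∧ 0 < e (φ x) ∧ e (φ x) < ⊤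
    · have htv : t = Real.sqrt ((e x).toReal / (e (φ x)).toReal) := by
        rw [htdef, sIf, if_pos hcond]
      have ht2 : t ^ 2 = (e x).toReal / (e (φ x)).toReal := by
        rw [htv, Real.sq_sqrt (div_nonneg ENNReal.toReal_nonneg ENNReal.toReal_nonneg)]
      have hofr : ENNReal.ofReal (t ^ 2) = e x * (e (φ x))⁻¹ := by
        rw [ht2]
        exact ofReal_toReal_div hcond.2.1.ne hcond.2.2.1.ne' hcond.2.2.2.ne
      rw [hofr, if_pos ⟨hcond.2.2.1, hcond.2.2.2⟩]
      apply le_of_eq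
      ring
    · have htv : t = 0 := by rw [htdef, sIf, if_neg hcond]
      rw [htv]
      simp
  calc ((‖r‖₊ : ℝ≥0∞)) ^ 2 * (‖ω x‖₊ : ℝ≥0∞) ^ 2
      = ENNReal.ofReal (r ^ 2) * (‖ω x‖₊ : ℝ≥0∞) ^ 2 := by rw [hcoe]
    _ ≤ (ENNReal.ofReal (2 * l ^ 2) + ENNReal.ofReal (2 * (1 - l) ^ 2) * ENNReal.ofReal (t ^ 2))
          * (‖ω x‖₊ : ℝ≥0∞) ^ 2 := by
        refine mul_le_mul_left ?_ _
        calc ENNReal.ofReal (r ^ 2) ≤ ENNReal.ofReal (2 * l ^ 2 + 2 * (1 - l) ^ 2 * t ^ 2) :=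
              ENNReal.ofReal_le_ofReal hkey
          _ = ENNReal.ofReal (2 * l ^ 2) + ENNReal.ofReal (2 * (1 - l) ^ 2 * t ^ 2) := by
              rw [ENNReal.ofReal_add (by positivity) (by positivity)]
          _ = ENNReal.ofReal (2 * l ^ 2) + ENNReal.ofReal (2 * (1 - l) ^ 2)
                * ENNReal.ofReal (t ^ 2) := by
              congr 1
              rw [ENNReal.ofReal_mul (p := 2 * (1 - l) ^ 2) (by positivity)]
    _ = ENNReal.ofReal (2 * l ^ 2) * (‖ω x‖₊ : ℝ≥0∞) ^ 2
          + ENNReal.ofReal (2 * (1 - l) ^ 2) * (ENNReal.ofReal (t ^ 2) * (‖ω x‖₊ : ℝ≥0∞) ^ 2) := by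
        ring
    _ ≤ _ := add_le_add_right (mul_le_mul_right hsub _) _

lemma pt_lo {φ : X → X} {ω : X → ℂ} {g : X → ℝ≥0∞} {l : ℝ}
    (hl : 0 < l) (hl1 : l < 1) {x : X} (hgx : g x < ⊤) :
    ENNReal.ofReal ((1 - l) ^ 2) *
        ((if 0 < g (φ x) ∧ g (φ x) < ⊤ then (g (φ x))⁻¹ else 0) *
          (g x * (‖ω x‖₊ : ℝ≥0∞) ^ 2)) ≤ (‖meanWeight φ ω g l x‖₊ : ℝ≥0∞) ^ 2 := by
  rw [meanWeight_nnnorm_sq]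
  by_cases hω0 : ω x = 0
  · simp [hω0]
  by_cases hc : 0 < g (φ x) ∧ g (φ x) < ⊤
  · have hcond : ω x ≠ 0 ∧ g x < ⊤ ∧ 0 < g (φ x) ∧ g (φ x) < ⊤ := ⟨hω0, hgx, hc.1, hc.2⟩
    set t : ℝ := sIf φ ω g x with htdef
    have ht0 : 0 ≤ t := sIf_nonneg φ ω g x
    set r : ℝ := t + l * (1 - t) with hrdef
    have hr0 : 0 ≤ r := by nlinarith
    have hcoe : ((‖r‖₊ : ℝ≥0∞)) ^ 2 = ENNReal.ofReal (r ^ 2) := by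
      rw [← enorm_eq_nnnorm, Real.enorm_eq_ofReal hr0, ← ENNReal.ofReal_pow hr0]
    have htv : t = Real.sqrt ((g x).toReal / (g (φ x)).toReal) := by
      rw [htdef, sIf, if_pos hcond]
    have ht2 : t ^ 2 = (g x).toReal / (g (φ x)).toReal := by
      rw [htv, Real.sq_sqrt (div_nonneg ENNReal.toReal_nonneg ENNReal.toReal_nonneg)]
    have hofr : ENNReal.ofReal (t ^ 2) = g x * (g (φ x))⁻¹ := by
      rw [ht2]
      exact ofReal_toReal_div hcond.2.1.ne hcond.2.2.1.ne' hcond.2.2.2.ne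
    have hr' : r = l + (1 - l) * t := by rw [hrdef]; ring
    have hkey : (1 - l) ^ 2 * t ^ 2 ≤ r ^ 2 := by
      rw [hr']
      nlinarith [mul_nonneg (mul_nonneg hl.le (sub_nonneg.2 hl1.le)) ht0, sq_nonneg l]
    rw [if_pos hc, hcoe]
    calc ENNReal.ofReal ((1 - l) ^ 2) * ((g (φ x))⁻¹ * (g x * (‖ω x‖₊ : ℝ≥0∞) ^ 2))
        = ENNReal.ofReal ((1 - l) ^ 2) * ENNReal.ofReal (t ^ 2) * (‖ω x‖₊ : ℝ≥0∞) ^ 2 := by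
          rw [hofr]; ring
      _ = ENNReal.ofReal ((1 - l) ^ 2 * t ^ 2) * (‖ω x‖₊ : ℝ≥0∞) ^ 2 := by
          rw [ENNReal.ofReal_mul (by positivity)]
      _ ≤ ENNReal.ofReal (r ^ 2) * (‖ω x‖₊ : ℝ≥0∞) ^ 2 :=
          mul_le_mul_left (ENNReal.ofReal_le_ofReal hkey) _
  · rw [if_neg hc]
    simp

lemma up_measure {φ : X → X} {ω : X → ℂ} {e : X → ℝ≥0∞} {l : ℝ}
    (hφ : Measurable φ) (hω : Measurable ω) (he : Measurable e)
    (hrn : (μ.withDensity fun x => (‖ω x‖₊ : ℝ≥0∞) ^ 2).map φ = μ.withDensity e)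
    (hl : 0 < l) (hl1 : l < 1) :
    (μ.withDensity fun x => (‖meanWeight φ ω e l x‖₊ : ℝ≥0∞) ^ 2).map φ ≤
      μ.withDensity fun y =>
        ENNReal.ofReal (2 * l ^ 2) * e y + ENNReal.ofReal (2 * (1 - l) ^ 2) *
          ((((μ.withDensity fun x => e x * (‖ω x‖₊ : ℝ≥0∞) ^ 2).map φ).rnDeriv μ) y *
            (if 0 < e y ∧ e y < ⊤ then (e y)⁻¹ else 0)) := by
  set c : X → ℝ≥0∞ := fun y => if 0 < e y ∧ e y < ⊤ then (e y)⁻¹ else 0 with hcdef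
  have hcm : Measurable c := by
    have h1 : MeasurableSet {y | 0 < e y} := he measurableSet_Ioi
    have h2 : MeasurableSet {y | e y < ⊤} := he measurableSet_Iio
    have hms : MeasurableSet {y | 0 < e y ∧ e y < ⊤} := h1.inter h2
    exact Measurable.ite hms he.inv measurable_const
  have hρm : Measurable fun x => (‖ω x‖₊ : ℝ≥0∞) ^ 2 := hω.nnnorm.coe_nnreal_ennreal.pow_const 2
  set κ := (μ.withDensity fun x => e x * (‖ω x‖₊ : ℝ≥0∞) ^ 2).map φ with hκdef
  have hκAC : κ ≪ μ := mapAC hφ hω hrn (fun x hx => by simp [hx])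
  have hκeq : μ.withDensity (κ.rnDeriv μ) = κ := Measure.withDensity_rnDeriv_eq κ μ hκAC
  have hkm : Measurable (κ.rnDeriv μ) := Measure.measurable_rnDeriv κ μ
  have t1 : (μ.withDensity fun x => ENNReal.ofReal (2 * l ^ 2) * (‖ω x‖₊ : ℝ≥0∞) ^ 2).map φ
      = μ.withDensity fun y => ENNReal.ofReal (2 * l ^ 2) * e y := by
    have h1 : (fun x => ENNReal.ofReal (2 * l ^ 2) * (‖ω x‖₊ : ℝ≥0∞) ^ 2)
        = ENNReal.ofReal (2 * l ^ 2) • fun x => (‖ω x‖₊ : ℝ≥0∞) ^ 2 := rfl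
    have h2 : (fun y => ENNReal.ofReal (2 * l ^ 2) * e y)
        = ENNReal.ofReal (2 * l ^ 2) • e := rfl
    rw [h1, h2, withDensity_smul _ hρm, Measure.map_smul, hrn, withDensity_smul _ he]
  have t2 : (μ.withDensity fun x =>
        ENNReal.ofReal (2 * (1 - l) ^ 2) * (c (φ x) * (e x * (‖ω x‖₊ : ℝ≥0∞) ^ 2))).map φ
      = μ.withDensity fun y => ENNReal.ofReal (2 * (1 - l) ^ 2) * (κ.rnDeriv μ y * c y) := by
    have h1 : (fun x => ENNReal.ofReal (2 * (1 - l) ^ 2) * (c (φ x) * (e x * (‖ω x‖₊ : ℝ≥0∞) ^ 2)))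
        = ENNReal.ofReal (2 * (1 - l) ^ 2) •
            (((fun x => e x * (‖ω x‖₊ : ℝ≥0∞) ^ 2) * fun x => c (φ x))) := by
      funext x
      simp only [Pi.smul_apply, Pi.mul_apply, smul_eq_mul]
      ring
    have h2 : (fun y => ENNReal.ofReal (2 * (1 - l) ^ 2) * (κ.rnDeriv μ y * c y))
        = ENNReal.ofReal (2 * (1 - l) ^ 2) • (κ.rnDeriv μ * c) := rfl
    have hcφ : Measurable fun x => c (φ x) := hcm.comp hφ
    have hmulm : Measurable ((fun x => e x * (‖ω x‖₊ : ℝ≥0∞) ^ 2) * fun x => c (φ x)) :=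
      (he.mul hρm).mul hcφ
    have hkC : Measurable (κ.rnDeriv μ * c) := hkm.mul hcm
    rw [h1, h2, withDensity_smul _ hmulm, Measure.map_smul,
      withDensity_mul μ (f := fun x => e x * (‖ω x‖₊ : ℝ≥0∞) ^ 2) (he.mul hρm) hcφ, map_withDensity_comp _ hφ hcm, ← hκdef,
      withDensity_smul _ hkC, withDensity_mul μ hkm hcm, hκeq]
  calc (μ.withDensity fun x => (‖meanWeight φ ω e l x‖₊ : ℝ≥0∞) ^ 2).map φ
      ≤ (μ.withDensity fun x => ENNReal.ofReal (2 * l ^ 2) * (‖ω x‖₊ : ℝ≥0∞) ^ 2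
          + ENNReal.ofReal (2 * (1 - l) ^ 2)
            * (c (φ x) * (e x * (‖ω x‖₊ : ℝ≥0∞) ^ 2))).map φ :=
        Measure.map_mono (withDensity_mono
          (Filter.Eventually.of_forall fun x => pt_up hl hl1 x)) hφ
    _ = (μ.withDensity fun x => ENNReal.ofReal (2 * l ^ 2) * (‖ω x‖₊ : ℝ≥0∞) ^ 2).map φ
          + (μ.withDensity fun x => ENNReal.ofReal (2 * (1 - l) ^ 2)
              * (c (φ x) * (e x * (‖ω x‖₊ : ℝ≥0∞) ^ 2))).map φ := by
        rw [← Measure.map_add _ _ hφ]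
        congr 1
        have hBm : Measurable fun x => ENNReal.ofReal (2 * (1 - l) ^ 2)
            * (c (φ x) * (e x * (‖ω x‖₊ : ℝ≥0∞) ^ 2)) :=
          measurable_const.mul (((hcm.comp hφ)).mul (he.mul hρm))
        rw [← withDensity_add_right _ hBm]
        rfl
    _ = _ := by
        have hGm : Measurable fun y => ENNReal.ofReal (2 * (1 - l) ^ 2)
            * (κ.rnDeriv μ y * c y) := measurable_const.mul (hkm.mul hcm)
        rw [t1, t2, ← withDensity_add_right _ hGm]
        rfl

lemma lo_measure {φ : X → X} {ω : X → ℂ} {e g : X → ℝ≥0∞} {l : ℝ}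
    (hφ : Measurable φ) (hω : Measurable ω) (he : Measurable e) (hg : Measurable g)
    (hrn : (μ.withDensity fun x => (‖ω x‖₊ : ℝ≥0∞) ^ 2).map φ = μ.withDensity e)
    (hle : ∀ x, e x ≤ g x) (hgfin : ∀ᵐ x ∂μ, g x < ⊤)
    (hl : 0 < l) (hl1 : l < 1) :
    (μ.withDensity fun y =>
        ENNReal.ofReal ((1 - l) ^ 2) *
          ((((μ.withDensity fun x => e x * (‖ω x‖₊ : ℝ≥0∞) ^ 2).map φ).rnDeriv μ) y *
            (if 0 < g y ∧ g y < ⊤ then (g y)⁻¹ else 0))) ≤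
      (μ.withDensity fun x => (‖meanWeight φ ω g l x‖₊ : ℝ≥0∞) ^ 2).map φ := by
  set C : X → ℝ≥0∞ := fun y => if 0 < g y ∧ g y < ⊤ then (g y)⁻¹ else 0 with hCdef
  have hCm : Measurable C := by
    have h1 : MeasurableSet {y | 0 < g y} := hg measurableSet_Ioi
    have h2 : MeasurableSet {y | g y < ⊤} := hg measurableSet_Iio
    have hms : MeasurableSet {y | 0 < g y ∧ g y < ⊤} := h1.inter h2
    exact Measurable.ite hms hg.inv measurable_const
  have hρm : Measurable fun x => (‖ω x‖₊ : ℝ≥0∞) ^ 2 := hω.nnnorm.coe_nnreal_ennreal.pow_const 2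
  set κ := (μ.withDensity fun x => e x * (‖ω x‖₊ : ℝ≥0∞) ^ 2).map φ with hκdef
  have hκAC : κ ≪ μ := mapAC hφ hω hrn (fun x hx => by simp [hx])
  have hκeq : μ.withDensity (κ.rnDeriv μ) = κ := Measure.withDensity_rnDeriv_eq κ μ hκAC
  have hkm : Measurable (κ.rnDeriv μ) := Measure.measurable_rnDeriv κ μ
  have step1 : (μ.withDensity fun y =>
      ENNReal.ofReal ((1 - l) ^ 2) * (κ.rnDeriv μ y * C y)) = ENNReal.ofReal ((1 - l) ^ 2)
        • (κ.withDensity C) := by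
    have h2 : (fun y => ENNReal.ofReal ((1 - l) ^ 2) * (κ.rnDeriv μ y * C y))
        = ENNReal.ofReal ((1 - l) ^ 2) • (κ.rnDeriv μ * C) := rfl
    have hkC : Measurable (κ.rnDeriv μ * C) := hkm.mul hCm
    rw [h2, withDensity_smul _ hkC, withDensity_mul μ hkm hCm, hκeq]
  rw [step1]
  have step2 : κ.withDensity C ≤
      ((μ.withDensity fun x => g x * (‖ω x‖₊ : ℝ≥0∞) ^ 2).map φ).withDensity C := by
    refine wd_mono_meas C (Measure.map_mono (withDensity_mono ?_) hφ)
    exact Filter.Eventually.of_forall fun x => mul_le_mul_left (hle x) _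
  refine le_trans (smul_mono_meas _ step2) ?_
  have step3 : ENNReal.ofReal ((1 - l) ^ 2)
        • (((μ.withDensity fun x => g x * (‖ω x‖₊ : ℝ≥0∞) ^ 2).map φ).withDensity C)
      = (μ.withDensity fun x =>
          ENNReal.ofReal ((1 - l) ^ 2) * (C (φ x) * (g x * (‖ω x‖₊ : ℝ≥0∞) ^ 2))).map φ := by
    have h1 : (fun x => ENNReal.ofReal ((1 - l) ^ 2) * (C (φ x) * (g x * (‖ω x‖₊ : ℝ≥0∞) ^ 2)))
        = ENNReal.ofReal ((1 - l) ^ 2) •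
            (((fun x => g x * (‖ω x‖₊ : ℝ≥0∞) ^ 2) * fun x => C (φ x))) := by
      funext x
      simp only [Pi.smul_apply, Pi.mul_apply, smul_eq_mul]
      ring
    have hCφ : Measurable fun x => C (φ x) := hCm.comp hφ
    have hmulm : Measurable ((fun x => g x * (‖ω x‖₊ : ℝ≥0∞) ^ 2) * fun x => C (φ x)) :=
      (hg.mul hρm).mul hCφ
    rw [h1, withDensity_smul _ hmulm, Measure.map_smul,
      withDensity_mul μ (f := fun x => g x * (‖ω x‖₊ : ℝ≥0∞) ^ 2) (hg.mul hρm) hCφ, map_withDensity_comp _ hφ hCm]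
  rw [step3]
  refine Measure.map_mono (withDensity_mono ?_) hφ
  filter_upwards [hgfin] with x hgx
  exact pt_lo hl hl1 hgx

lemma hat_finite {φ : X → X} {ω : X → ℂ} {e g : X → ℝ≥0∞} {l : ℝ}
    (hφ : Measurable φ) (hω : Measurable ω) (he : Measurable e) (hg : Measurable g)
    (hrn : (μ.withDensity fun x => (‖ω x‖₊ : ℝ≥0∞) ^ 2).map φ = μ.withDensity e)
    (hle : ∀ x, e x ≤ g x) (hefin : ∀ᵐ x ∂μ, e x < ⊤) (hgfin : ∀ᵐ x ∂μ, g x < ⊤)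
    (hl : 0 < l) (hl1 : l < 1)
    (hdense : Dense {f : Lp ℂ 2 μ | MemLp (fun x => meanWeight φ ω g l x * f (φ x)) 2 μ}) :
    ∀ᵐ x ∂μ,
      ((μ.withDensity fun x => (‖meanWeight φ ω e l x‖₊ : ℝ≥0∞) ^ 2).map φ).rnDeriv μ x < ⊤ := by
  have hwgm : Measurable (meanWeight φ ω g l) := measurable_meanWeight hφ hω hg
  have hwem : Measurable (meanWeight φ ω e l) := measurable_meanWeight hφ hω he
  set Mg := (μ.withDensity fun x => (‖meanWeight φ ω g l x‖₊ : ℝ≥0∞) ^ 2).map φ with hMgdef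
  have hMgAC : Mg ≪ μ :=
    mapAC hφ hω hrn (fun x hx => by simp [meanWeight_zero hx])
  have hMgeq : μ.withDensity (Mg.rnDeriv μ) = Mg := Measure.withDensity_rnDeriv_eq Mg μ hMgAC
  have hset : {f : Lp ℂ 2 μ | MemLp (fun x => meanWeight φ ω g l x * f (φ x)) 2 μ}
      = {f : Lp ℂ 2 μ | ∫⁻ x, (‖f x‖₊ : ℝ≥0∞) ^ 2 * Mg.rnDeriv μ x ∂μ < ⊤} :=
    Set.ext fun f => memIff hφ hwgm (Measure.measurable_rnDeriv Mg μ) hMgeq.symm f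
  have hHg : ∀ᵐ x ∂μ, Mg.rnDeriv μ x < ⊤ :=
    ae_lt_top_of_dense (Measure.measurable_rnDeriv Mg μ) (hset ▸ hdense)
  set κ := (μ.withDensity fun x => e x * (‖ω x‖₊ : ℝ≥0∞) ^ 2).map φ with hκdef
  have hkm : Measurable (κ.rnDeriv μ) := Measure.measurable_rnDeriv κ μ
  set C : X → ℝ≥0∞ := fun y => if 0 < g y ∧ g y < ⊤ then (g y)⁻¹ else 0 with hCdef
  have hCm : Measurable C := by
    have h1 : MeasurableSet {y | 0 < g y} := hg measurableSet_Ioi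
    have h2 : MeasurableSet {y | g y < ⊤} := hg measurableSet_Iio
    exact Measurable.ite (h1.inter h2) hg.inv measurable_const
  set c : X → ℝ≥0∞ := fun y => if 0 < e y ∧ e y < ⊤ then (e y)⁻¹ else 0 with hcdef
  have hcm : Measurable c := by
    have h1 : MeasurableSet {y | 0 < e y} := he measurableSet_Ioi
    have h2 : MeasurableSet {y | e y < ⊤} := he measurableSet_Iio
    exact Measurable.ite (h1.inter h2) he.inv measurable_const
  -- lower bound gives k * C < ⊤ a.e.
  have hlow := lo_measure hφ hω he hg hrn hle hgfin hl hl1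
  rw [← hMgdef, ← hMgeq] at hlow
  have hlow' : (fun y => ENNReal.ofReal ((1 - l) ^ 2) * (κ.rnDeriv μ y * C y))
      ≤ᵐ[μ] Mg.rnDeriv μ :=
    ae_le_of_withDensity_le (measurable_const.mul (hkm.mul hCm)) hlow
  have hofne : ENNReal.ofReal ((1 - l) ^ 2) ≠ 0 := by
    rw [Ne, ENNReal.ofReal_eq_zero, not_le]
    exact pow_pos (sub_pos.2 hl1) 2
  have hkC : ∀ᵐ y ∂μ, κ.rnDeriv μ y * C y < ⊤ := by
    filter_upwards [hlow', hHg] with y h1 h2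
    by_contra hcontra
    rw [not_lt, top_le_iff] at hcontra
    rw [hcontra, ENNReal.mul_top hofne] at h1
    exact absurd (lt_of_le_of_lt h1 h2) (lt_irrefl ⊤)
  -- transfer to c
  have hkc : ∀ᵐ y ∂μ, κ.rnDeriv μ y * c y < ⊤ := by
    filter_upwards [hkC, hefin, hgfin] with y h1 he' hg'
    by_cases hey : 0 < e y ∧ e y < ⊤
    · have hgy : 0 < g y := lt_of_lt_of_le hey.1 (hle y)
      have hCy : C y = (g y)⁻¹ := if_pos ⟨hgy, hg'⟩
      have hCne : C y ≠ 0 := by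
        rw [hCy]
        exact ENNReal.inv_ne_zero.2 hg'.ne
      have hk : κ.rnDeriv μ y < ⊤ := by
        by_contra hk
        rw [not_lt, top_le_iff] at hk
        rw [hk, ENNReal.top_mul hCne] at h1
        exact absurd h1 (lt_irrefl ⊤)
      have hcy : c y = (e y)⁻¹ := if_pos hey
      rw [hcy]
      exact ENNReal.mul_lt_top hk (ENNReal.inv_lt_top.2 hey.1)
    · have hc0 : c y = 0 := if_neg hey
      rw [hc0, mul_zero]
      exact ENNReal.zero_lt_top
  -- upper bound
  set Me := (μ.withDensity fun x => (‖meanWeight φ ω e l x‖₊ : ℝ≥0∞) ^ 2).map φ with hMedef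
  have hMeAC : Me ≪ μ :=
    mapAC hφ hω hrn (fun x hx => by simp [meanWeight_zero hx])
  have hMeeq : μ.withDensity (Me.rnDeriv μ) = Me := Measure.withDensity_rnDeriv_eq Me μ hMeAC
  have hup := up_measure hφ hω he hrn hl hl1
  rw [← hMedef, ← hMeeq] at hup
  have hup' : Me.rnDeriv μ ≤ᵐ[μ] fun y => ENNReal.ofReal (2 * l ^ 2) * e y
      + ENNReal.ofReal (2 * (1 - l) ^ 2) * (κ.rnDeriv μ y * c y) :=
    ae_le_of_withDensity_le (Measure.measurable_rnDeriv Me μ) hup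
  filter_upwards [hup', hefin, hkc] with y h1 h2 h3
  refine lt_of_le_of_lt h1 ?_
  exact ENNReal.add_lt_top.2 ⟨ENNReal.mul_lt_top ENNReal.ofReal_lt_top h2,
    ENNReal.mul_lt_top ENNReal.ofReal_lt_top h3⟩

end S11

open S11

/-- **Proposition 4.14**: for `λ ∈ (0,1)`, if the domain of the λ-spherical mean
transform of the pair (with weights `ω_λ^i` built from `h = h₁+h₂`) is dense in
`L²(μ)`, then for each `i = 1,2` the domain of the λ-mean transform of the single
operator `C_{φᵢ,ωᵢ}` (with weight `ω̂_λ^i` built from `hᵢ`) is dense in `L²(μ)`; in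
particular the toral λ-spherical mean transform is densely defined. -/
theorem stmt_11
    {X : Type*} [MeasurableSpace X] (μ : Measure X) [SigmaFinite μ]
    (φ₁ φ₂ : X → X) (ω₁ ω₂ : X → ℂ)
    (hφ₁ : Measurable φ₁) (hφ₂ : Measurable φ₂)
    (hω₁ : Measurable ω₁) (hω₂ : Measurable ω₂)
    (h₁ h₂ : X → ℝ≥0∞) (hh₁ : Measurable h₁) (hh₂ : Measurable h₂)
    -- `C_{φᵢ,ωᵢ}` is well defined with Radon–Nikodym derivative `hᵢ`
    (hrn₁ : (μ.withDensity fun x => (‖ω₁ x‖₊ : ℝ≥0∞) ^ 2).map φ₁ = μ.withDensity h₁)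
    (hrn₂ : (μ.withDensity fun x => (‖ω₂ x‖₊ : ℝ≥0∞) ^ 2).map φ₂ = μ.withDensity h₂)
    -- `C_{φᵢ,ωᵢ}` is densely defined, i.e. `hᵢ < ∞` a.e. `[μ]`
    (hfin₁ : ∀ᵐ x ∂μ, h₁ x < ⊤) (hfin₂ : ∀ᵐ x ∂μ, h₂ x < ⊤)
    (l : ℝ) (hl : l ∈ Set.Ioo (0 : ℝ) 1)
    (hdense : Dense {f : Lp ℂ 2 μ |
      MemLp (fun x => meanWeight φ₁ ω₁ (fun y => h₁ y + h₂ y) l x * f (φ₁ x)) 2 μ ∧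
      MemLp (fun x => meanWeight φ₂ ω₂ (fun y => h₁ y + h₂ y) l x * f (φ₂ x)) 2 μ}) :
    Dense {f : Lp ℂ 2 μ | MemLp (fun x => meanWeight φ₁ ω₁ h₁ l x * f (φ₁ x)) 2 μ} ∧
    Dense {f : Lp ℂ 2 μ | MemLp (fun x => meanWeight φ₂ ω₂ h₂ l x * f (φ₂ x)) 2 μ} ∧
    Dense {f : Lp ℂ 2 μ |
      MemLp (fun x => meanWeight φ₁ ω₁ h₁ l x * f (φ₁ x)) 2 μ ∧
      MemLp (fun x => meanWeight φ₂ ω₂ h₂ l x * f (φ₂ x)) 2 μ} := by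
  obtain ⟨hl0, hl1⟩ := hl
  set g : X → ℝ≥0∞ := fun y => h₁ y + h₂ y with hgdef
  have hgm : Measurable g := hh₁.add hh₂
  have hgfin : ∀ᵐ x ∂μ, g x < ⊤ := by
    filter_upwards [hfin₁, hfin₂] with x a b
    exact ENNReal.add_lt_top.2 ⟨a, b⟩
  have hd1 : Dense {f : Lp ℂ 2 μ | MemLp (fun x => meanWeight φ₁ ω₁ g l x * f (φ₁ x)) 2 μ} :=
    hdense.mono fun f hf => hf.1
  have hd2 : Dense {f : Lp ℂ 2 μ | MemLp (fun x => meanWeight φ₂ ω₂ g l x * f (φ₂ x)) 2 μ} :=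
    hdense.mono fun f hf => hf.2
  have hfinhat₁ := hat_finite hφ₁ hω₁ hh₁ hgm hrn₁ (fun x => le_self_add) hfin₁ hgfin
    hl0 hl1 hd1
  have hfinhat₂ := hat_finite hφ₂ hω₂ hh₂ hgm hrn₂ (fun x => le_add_self) hfin₂ hgfin
    hl0 hl1 hd2
  set M₁ := (μ.withDensity fun x => (‖meanWeight φ₁ ω₁ h₁ l x‖₊ : ℝ≥0∞) ^ 2).map φ₁ with hM1
  set M₂ := (μ.withDensity fun x => (‖meanWeight φ₂ ω₂ h₂ l x‖₊ : ℝ≥0∞) ^ 2).map φ₂ with hM2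
  have hM1AC : M₁ ≪ μ := mapAC hφ₁ hω₁ hrn₁ (fun x hx => by simp [meanWeight_zero hx])
  have hM2AC : M₂ ≪ μ := mapAC hφ₂ hω₂ hrn₂ (fun x hx => by simp [meanWeight_zero hx])
  have heq₁ : μ.withDensity (M₁.rnDeriv μ) = M₁ := Measure.withDensity_rnDeriv_eq M₁ μ hM1AC
  have heq₂ : μ.withDensity (M₂.rnDeriv μ) = M₂ := Measure.withDensity_rnDeriv_eq M₂ μ hM2AC
  have hiff₁ : ∀ f : Lp ℂ 2 μ, MemLp (fun x => meanWeight φ₁ ω₁ h₁ l x * f (φ₁ x)) 2 μ ↔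
      ∫⁻ x, (‖f x‖₊ : ℝ≥0∞) ^ 2 * M₁.rnDeriv μ x ∂μ < ⊤ := fun f =>
    memIff hφ₁ (measurable_meanWeight hφ₁ hω₁ hh₁) (Measure.measurable_rnDeriv _ _) heq₁.symm f
  have hiff₂ : ∀ f : Lp ℂ 2 μ, MemLp (fun x => meanWeight φ₂ ω₂ h₂ l x * f (φ₂ x)) 2 μ ↔
      ∫⁻ x, (‖f x‖₊ : ℝ≥0∞) ^ 2 * M₂.rnDeriv μ x ∂μ < ⊤ := fun f =>
    memIff hφ₂ (measurable_meanWeight hφ₂ hω₂ hh₂) (Measure.measurable_rnDeriv _ _) heq₂.symm f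
  have hdense0 : Dense {f : Lp ℂ 2 μ |
      ∫⁻ x, (‖f x‖₊ : ℝ≥0∞) ^ 2 * (M₁.rnDeriv μ x + M₂.rnDeriv μ x) ∂μ < ⊤} := by
    refine dense_of_ae_lt_top
      ((Measure.measurable_rnDeriv _ _).add (Measure.measurable_rnDeriv _ _)) ?_
    filter_upwards [hfinhat₁, hfinhat₂] with x a b
    exact ENNReal.add_lt_top.2 ⟨a, b⟩
  have hsub : {f : Lp ℂ 2 μ |
        ∫⁻ x, (‖f x‖₊ : ℝ≥0∞) ^ 2 * (M₁.rnDeriv μ x + M₂.rnDeriv μ x) ∂μ < ⊤} ⊆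
      {f : Lp ℂ 2 μ |
        MemLp (fun x => meanWeight φ₁ ω₁ h₁ l x * f (φ₁ x)) 2 μ ∧
        MemLp (fun x => meanWeight φ₂ ω₂ h₂ l x * f (φ₂ x)) 2 μ} := by
    intro f hf
    constructor
    · exact (hiff₁ f).mpr (lt_of_le_of_lt
        (lintegral_mono fun x => mul_le_mul_right le_self_add _) hf)
    · exact (hiff₂ f).mpr (lt_of_le_of_lt
        (lintegral_mono fun x => mul_le_mul_right le_add_self _) hf)
  have hd3 : Dense {f : Lp ℂ 2 μ |
      MemLp (fun x => meanWeight φ₁ ω₁ h₁ l x * f (φ₁ x)) 2 μ ∧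
      MemLp (fun x => meanWeight φ₂ ω₂ h₂ l x * f (φ₂ x)) 2 μ} := hdense0.mono hsub
  exact ⟨hd3.mono fun f hf => hf.1, hd3.mono fun f hf => hf.2, hd3⟩
end
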